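/- arXiv:0705.4057 — 6 statements merged into one kernel-verified Lean document; each statement's English description precedes it below -/
import Mathlib

section
/- Let g, h : ℝ → ℝ be continuous strictly increasing maps with g(x+1) = g(x) + 1 and h(x+1) = h(x) + 1 for all x ∈ ℝ. If h(x) < g(x) for all x ∈ ℝ, and if at least one of the translation numbers r(h), r(g) is irrational, then r(h) < r(g). -/
open Filter Topology Set

/-- If `α` is irrational, integer combinations `q • α + p` with `q > 0` get within `ε` of `0`. -/
lemma aux_dense_approx (α : ℝ) (hα : Irrational α) {ε : ℝ} (hε : 0 < ε) :
    ∃ (q : ℕ) (p : ℤ), 0 < q ∧ |(q : ℝ) * α - p| < ε := by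
  set S : AddSubgroup ℝ := (Submodule.span ℤ ({1, α} : Set ℝ)).toAddSubgroup with hS
  rcases S.dense_or_cyclic with hd | ⟨a, ha⟩
  · -- dense case: find small positive element with nonzero α-coefficient
    set δ : ℝ := min ε (1 / 2) with hδ
    have hδpos : 0 < δ := lt_min hε (by norm_num)
    obtain ⟨s, hsS, hs0, hsδ⟩ := hd.exists_between hδpos
    have : s ∈ Submodule.span ℤ ({1, α} : Set ℝ) := hsS
    rw [Submodule.mem_span_pair] at this
    obtain ⟨m, n, hmn⟩ := this
    have hn : n ≠ 0 := by
      rintro rfl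
      have hms : (m : ℝ) = s := by simpa [zsmul_eq_mul] using hmn
      have h1 : (0 : ℝ) < (m : ℝ) := hms ▸ hs0
      have h2 : (m : ℝ) < 1 := by
        have : δ ≤ 1 / 2 := min_le_right _ _
        rw [hms]; linarith
      have h1' : 0 < m := by exact_mod_cast h1
      have h2' : m < 1 := by exact_mod_cast h2
      omega
    have hmn' : (m : ℝ) + n * α = s := by
      simpa [zsmul_eq_mul] using hmn
    rcases lt_or_gt_of_ne hn with hneg | hpos
    · refine ⟨(-n).toNat, m, by omega, ?_⟩
      have : ((-n).toNat : ℝ) = (-n : ℤ) := by exact_mod_cast Int.toNat_of_nonneg (by omega)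
      rw [this]
      push_cast
      have : -(n : ℝ) * α - m = -s := by linarith
      rw [this, abs_neg, abs_of_pos hs0]
      exact lt_of_lt_of_le hsδ (min_le_left _ _)
    · refine ⟨n.toNat, -m, by omega, ?_⟩
      have : (n.toNat : ℝ) = (n : ℤ) := by exact_mod_cast Int.toNat_of_nonneg (by omega)
      rw [this]
      push_cast
      have : (n : ℝ) * α - (-m) = s := by linarith
      rw [this, abs_of_pos hs0]
      exact lt_of_lt_of_le hsδ (min_le_left _ _)
  · -- cyclic case: α would be rational
    exfalso
    have h1 : (1 : ℝ) ∈ S := by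
      apply Submodule.subset_span; simp
    have h2 : α ∈ S := by
      apply Submodule.subset_span; simp
    rw [ha, AddSubgroup.mem_closure_singleton] at h1 h2
    obtain ⟨n, hn⟩ := h1
    obtain ⟨m, hm⟩ := h2
    have hn0 : n ≠ 0 := by rintro rfl; simp at hn
    have ha0 : a ≠ 0 := by rintro rfl; simp at hn
    have : α = (m : ℝ) / n := by
      field_simp
      rw [mul_comm]
      have hna : (n : ℝ) * a = 1 := by simpa [zsmul_eq_mul] using hn
      have hma : (m : ℝ) * a = α := by simpa [zsmul_eq_mul] using hm
      calc (n : ℝ) * α = n * (m * a) := by rw [hma]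
        _ = m * (n * a) := by ring
        _ = m := by rw [hna, mul_one]
    exact (hα.ne_rat ((m : ℚ) / (n : ℚ))) (by rw [this]; push_cast; ring)

/-- If `h < g` pointwise for two degree-one lifts and at least one of the
translation numbers `r(h)`, `r(g)` is irrational, then `r(h) < r(g)`. -/
theorem poncelet_stmt1
    (g h : ℝ → ℝ)
    (hgc : Continuous g) (hhc : Continuous h)
    (hgm : StrictMono g) (hhm : StrictMono h)
    (hgper : ∀ x : ℝ, g (x + 1) = g x + 1)
    (hhper : ∀ x : ℝ, h (x + 1) = h x + 1)
    (hlt : ∀ x : ℝ, h x < g x)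
    (rg rh : ℝ)
    (hrg : ∀ x : ℝ, Tendsto (fun k : ℕ => (g^[k] x - x) / k) atTop (nhds rg))
    (hrh : ∀ x : ℝ, Tendsto (fun k : ℕ => (h^[k] x - x) / k) atTop (nhds rh))
    (hirr : Irrational rh ∨ Irrational rg) :
    rh < rg := by
  set G : CircleDeg1Lift := ⟨⟨g, hgm.monotone⟩, hgper⟩ with hGdef
  set H : CircleDeg1Lift := ⟨⟨h, hhm.monotone⟩, hhper⟩ with hHdef
  have hGg : ⇑G = g := rfl
  have hHh : ⇑H = h := rfl
  have hgC : Continuous ⇑G := hgc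
  have hhC : Continuous ⇑H := hhc
  have hτG : CircleDeg1Lift.translationNumber G = rg :=
    tendsto_nhds_unique
      (by simpa [CircleDeg1Lift.coe_pow, hGg] using G.tendsto_translationNumber 0) (hrg 0)
  have hτH : CircleDeg1Lift.translationNumber H = rh :=
    tendsto_nhds_unique
      (by simpa [CircleDeg1Lift.coe_pow, hHh] using H.tendsto_translationNumber 0) (hrh 0)
  have hle : rh ≤ rg := by
    rw [← hτG, ← hτH]
    exact CircleDeg1Lift.translationNumber_mono (fun x => (hlt x).le)
  rcases hle.lt_or_eq with hlt' | heq
  · exact hlt'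
  exfalso
  -- now rh = rg =: α, irrational
  set α := rg with hα
  have hirrα : Irrational α := by
    rcases hirr with h1 | h1
    · exact heq ▸ h1
    · exact h1
  -- uniform gap ε
  obtain ⟨x₀, hx₀mem, hx₀min⟩ :=
    isCompact_Icc.exists_isMinOn (α := ℝ) (nonempty_Icc.2 zero_le_one)
      ((hgc.sub hhc).continuousOn (s := Icc (0:ℝ) 1))
  set ε : ℝ := g x₀ - h x₀ with hεdef
  have hε : 0 < ε := sub_pos.2 (hlt x₀)
  have hεle : ∀ x, h x + ε ≤ g x := by
    intro x
    have hfr : g (Int.fract x) - h (Int.fract x) = g x - h x := by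
      have h1 := G.map_fract_sub_fract_eq x
      have h2 := H.map_fract_sub_fract_eq x
      rw [hGg] at h1; rw [hHh] at h2
      linarith
    have h3 : g x₀ - h x₀ ≤ g (Int.fract x) - h (Int.fract x) :=
      hx₀min ⟨Int.fract_nonneg x, (Int.fract_lt_one x).le⟩
    linarith
  -- iterate gap
  have hitgap : ∀ n : ℕ, 0 < n → ∀ x, h^[n] x + ε ≤ g^[n] x := by
    intro n hn
    induction n with
    | zero => omega
    | succ m ih =>
      intro x
      rcases Nat.eq_zero_or_pos m with rfl | hm
      · simpa using hεle x
      · have h1 : h^[m] x + ε ≤ g^[m] x := ih hm x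
        have h2 : h^[m] x ≤ g^[m] x := by linarith
        calc h^[m+1] x + ε = h (h^[m] x) + ε := by rw [Function.iterate_succ_apply']
          _ ≤ g (h^[m] x) := hεle _
          _ ≤ g (g^[m] x) := hgm.monotone h2
          _ = g^[m+1] x := (Function.iterate_succ_apply' g m x).symm
  -- rational approximation
  obtain ⟨q, p, hq, hqp⟩ := aux_dense_approx α hirrα hε
  have hq' : (0:ℝ) < q := by exact_mod_cast hq
  -- points where iterates realize the translation number
  obtain ⟨xg, hxg⟩ := (G ^ q).exists_eq_add_translationNumber (G.continuous_pow hgC q)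
  obtain ⟨xh, hxh⟩ := (H ^ q).exists_eq_add_translationNumber (H.continuous_pow hhC q)
  rw [CircleDeg1Lift.coe_pow, CircleDeg1Lift.translationNumber_pow, hGg, hτG] at hxg
  rw [CircleDeg1Lift.coe_pow, CircleDeg1Lift.translationNumber_pow, hHh, hτH, heq] at hxh
  -- hxg : g^[q] xg = xg + q * α ; hxh : h^[q] xh = xh + q * α
  have hrat : α = (p : ℝ) / q := by
    rcases le_or_gt (p : ℝ) (q * α) with hple | hplt
    · -- find a periodic point of h
      have hc : Continuous fun z => h^[q] z - z := (hhc.iterate q).sub continuous_id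
      have hv1 : h^[q] xg - xg ≤ q * α - ε := by
        have := hitgap q hq xg; rw [hxg] at this; linarith
      have hv2 : h^[q] xh - xh = q * α := by rw [hxh]; ring
      have hp1 : h^[q] xg - xg ≤ (p : ℝ) := by
        have := (abs_lt.1 hqp).2; linarith
      have hp2 : (p : ℝ) ≤ h^[q] xh - xh := by rw [hv2]; exact hple
      obtain ⟨z, hz⟩ := intermediate_value_univ xg xh hc ⟨hp1, hp2⟩
      have hz' : (H ^ q) z = z + p := by
        have hz2 : h^[q] z - z = (p : ℝ) := hz
        rw [CircleDeg1Lift.coe_pow, hHh]; linarith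
      rw [← heq, ← hτH]
      exact H.translationNumber_of_map_pow_eq_add_int hz' hq
    · -- find a periodic point of g
      have hc : Continuous fun z => g^[q] z - z := (hgc.iterate q).sub continuous_id
      have hv1 : g^[q] xg - xg = q * α := by rw [hxg]; ring
      have hv2 : q * α + ε ≤ g^[q] xh - xh := by
        have := hitgap q hq xh; rw [hxh] at this; linarith
      have hp1 : g^[q] xg - xg ≤ (p : ℝ) := by rw [hv1]; exact hplt.le
      have hp2 : (p : ℝ) ≤ g^[q] xh - xh := by
        have := (abs_lt.1 hqp).1; linarith
      obtain ⟨z, hz⟩ := intermediate_value_univ xg xh hc ⟨hp1, hp2⟩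
      have hz' : (G ^ q) z = z + p := by
        have hz2 : g^[q] z - z = (p : ℝ) := hz
        rw [CircleDeg1Lift.coe_pow, hGg]; linarith
      rw [← hτG]
      exact G.translationNumber_of_map_pow_eq_add_int hz' hq
  exact hirrα.ne_rat ((p : ℚ) / (q : ℚ)) (by rw [hrat]; push_cast; ring)
end

section
/- Let F = (F₁, F₂) : ℝ² → ℝ² be a C¹ diffeomorphism of the plane such that: F₁(x+1,y) = F₁(x,y) + 1 and F₂(x+1,y) = F₂(x,y) for all (x,y); F preserves the measure μ = ρ·λ, where λ is two-dimensional Lebesgue measure and ρ : ℝ² → (0,∞) is continuous and satisfies ρ(x+1,y) = ρ(x,y); and ∂F₁/∂y (x,y) > 0 everywhere (the twist condition). Let φ₁, φ₂ : ℝ → ℝ be continuous 1-periodic functions with φ₁(x) < φ₂(x) for all x, whose graphs are each invariant under F (F maps the graph of φᵢ onto itself). Define g₁(x) = F₁(x, φ₁(x)) and g₂(x) = F₁(x, φ₂(x)). Then the translation numbers satisfy r(g₁) < r(g₂). -/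
/-! The twist gives `g₁ < g₂`. Suppose `r(g₂) ≤ r(g₁)`: then the orbits `bₖ = g₂ᵏ(0)` and
`aₖ = g₁ᵏ(n)` satisfy `bₖ + δ ≤ aₖ` for every `k` once `n` is large. Let `V(s, t)` be the part
of the annulus between the two graphs lying over `[s, t)`. The annulus is `F`-invariant and, by
the twist, `g₁(x) < F₁(x, y) < g₂(x)` inside it, so `F⁻¹ V(bₖ₊₁, aₖ₊₁) ⊆ V(bₖ, aₖ)`; moreover
the inclusion misses the band of width `δ` under the upper graph to the left of `aₖ`. By
periodicity these bands have `μ`-measure bounded below, so the finite measures `μ V(bₖ, aₖ)`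
decrease by a fixed amount at every step, which is absurd. -/

open Filter Topology Set MeasureTheory

def planeGraph (φ : ℝ → ℝ) : Set (ℝ × ℝ) := {p : ℝ × ℝ | p.2 = φ p.1}

open scoped ENNReal

lemma exists_pos_forall_pos_of_periodic {h : ℝ × ℝ → ℝ} (hc : Continuous h)
    (hper : ∀ s, Function.Periodic (fun t => h (t, s)) 1) (h0 : ∀ t, 0 < h (t, 0)) :
    ∃ δ > 0, ∀ t, 0 < h (t, δ) := by
  have hK : ∀ᶠ s in 𝓝 (0 : ℝ), ∀ t ∈ Icc (0 : ℝ) 1, 0 < h (t, s) :=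
    isCompact_Icc.eventually_forall_of_forall_eventually fun t _ =>
      continuousAt_const.eventually_lt (hc.comp continuous_swap).continuousAt (h0 t)
  obtain ⟨δ, hδK, hδ⟩ :=
    ((hK.filter_mono nhdsWithin_le_nhds).and (self_mem_nhdsWithin (s := Ioi 0))).exists
  refine ⟨δ, hδ, fun t => ?_⟩
  rw [← (hper δ).sub_int_mul_eq ⌊t⌋, mul_one, ← Int.fract]
  exact hδK _ ⟨Int.fract_nonneg t, (Int.fract_lt_one t).le⟩

lemma exists_pos_forall_le_of_periodic_fst {ρ : ℝ × ℝ → ℝ} (hc : Continuous ρ)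
    (hpos : ∀ p, 0 < ρ p) (hper : ∀ y, Function.Periodic (fun x => ρ (x, y)) 1)
    {K : Set ℝ} (hK : IsCompact K) : ∃ m > 0, ∀ p : ℝ × ℝ, p.2 ∈ K → m ≤ ρ p := by
  obtain ⟨m, hm, hmK⟩ :=
    (isCompact_Icc.prod hK).exists_forall_le' hc.continuousOn fun p _ => hpos p
  refine ⟨m, hm, fun p hp => ?_⟩
  rw [← (hper p.2).sub_int_mul_eq ⌊p.1⌋, mul_one, ← Int.fract]
  exact hmK _ ⟨⟨Int.fract_nonneg _, (Int.fract_lt_one _).le⟩, hp⟩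

lemma strictMono_of_injective_of_map_add_one {g : ℝ → ℝ} (hc : Continuous g)
    (hinj : Function.Injective g) (h1 : ∀ x, g (x + 1) = g x + 1) : StrictMono g := by
  refine (hc.strictMono_of_inj hinj).resolve_right fun hanti => ?_
  have := hanti (lt_add_one 0)
  rw [h1] at this
  linarith

lemma pos_of_isPreconnected_of_ne_zero {s : Set ℝ} (hs : IsPreconnected s) {u : ℝ → ℝ}
    (hu : ContinuousOn u s) (hne : ∀ y ∈ s, u y ≠ 0) {a b : ℝ} (ha : a ∈ s) (hb : b ∈ s)
    (hpos : 0 < u a) : 0 < u b := by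
  by_contra! hb0
  obtain ⟨c, hc, hc0⟩ := hs.intermediate_value hb ha hu ⟨hb0, hpos.le⟩
  exact hne c hc hc0

lemma ENNReal.eq_top_of_forall_add_le {u : ℕ → ℝ≥0∞} {δ : ℝ≥0∞} (hδ : δ ≠ 0)
    (h : ∀ k, u (k + 1) + δ ≤ u k) : u 0 = ⊤ := by
  have hsum : ∀ k : ℕ, u k + k * δ ≤ u 0 := by
    intro k
    induction k with
    | zero => simp
    | succ k ih =>
      calc u (k + 1) + (k + 1 : ℕ) * δ = u (k + 1) + δ + k * δ := by push_cast; ring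
        _ ≤ u k + k * δ := by gcongr; exact h k
        _ ≤ u 0 := ih
  by_contra hfin
  obtain ⟨k, hk⟩ := ENNReal.exists_nat_mul_gt hδ hfin
  exact (hk.trans_le (le_add_self.trans (hsum k))).false

lemma MeasureTheory.MeasurePreserving.measure_add_le_of_preimage_subset {α : Type*}
    [MeasurableSpace α] {μ : Measure α} {F : α → α} (hF : MeasurePreserving F μ μ)
    {T B V : Set α} (hT : MeasurableSet T) (hB : MeasurableSet B) (hTV : F ⁻¹' T ⊆ V)
    (hBV : B ⊆ V) (hdisj : Disjoint (F ⁻¹' T) B) : μ T + μ B ≤ μ V := by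
  rw [← hF.measure_preimage hT.nullMeasurableSet, ← measure_union hdisj hB]
  exact measure_mono (union_subset hTV hBV)

lemma ofReal_mul_le_withDensity_ofReal {α : Type*} [MeasurableSpace α] {μ : Measure α}
    {ρ : α → ℝ} {m : ℝ} {s : Set α} (hs : MeasurableSet s) (hm : ∀ p ∈ s, m ≤ ρ p) :
    ENNReal.ofReal m * μ s ≤ μ.withDensity (fun p => ENNReal.ofReal (ρ p)) s := by
  rw [withDensity_apply _ hs, ← setLIntegral_const]
  exact setLIntegral_mono' hs fun p hp => ENNReal.ofReal_le_ofReal (hm p hp)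

lemma volume_regionBetween_sub_const_Ico {φ : ℝ → ℝ} (hφ : Measurable φ) {δ : ℝ} (a b : ℝ) :
    volume (regionBetween (fun t => φ t - δ) φ (Ico a b)) =
      ENNReal.ofReal δ * ENNReal.ofReal (b - a) := by
  rw [Measure.volume_eq_prod, volume_regionBetween_eq_lintegral' (hφ.sub_const δ) hφ
    measurableSet_Ico]
  simp [Real.volume_Ico]

theorem CircleDeg1Lift.pow_map_zero_le_add_two {f g : CircleDeg1Lift}
    (h : g.translationNumber ≤ f.translationNumber) (k : ℕ) : (g ^ k) 0 ≤ (f ^ k) 0 + 2 := by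
  have hf := abs_le.1 (f.dist_pow_map_zero_mul_translationNumber_le k)
  have hg := abs_le.1 (g.dist_pow_map_zero_mul_translationNumber_le k)
  have : (k : ℝ) * g.translationNumber ≤ k * f.translationNumber := by gcongr
  linarith [hf.1, hg.2]

theorem CircleDeg1Lift.translationNumber_lt_of_measure_step {α : Type*} [MeasurableSpace α]
    {μ : Measure α} (S : ℝ → ℝ → Set α) (f g : CircleDeg1Lift) {δ : ℝ} {δν : ℝ≥0∞}
    (hδν : δν ≠ 0) (hfin : ∀ s t, μ (S s t) ≠ ⊤)
    (hstep : ∀ x x', x + δ ≤ x' → μ (S (g x) (f x')) + δν ≤ μ (S x x')) :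
    f.translationNumber < g.translationNumber := by
  by_contra! hle
  -- Both orbits of `0` stay within `1` of `k * τ`, hence the `2`.
  set n := ⌈δ⌉₊ + 2
  have hgap : ∀ k : ℕ, (g ^ k) 0 + δ ≤ (f ^ k) n := fun k => by
    have := Nat.le_ceil δ
    rw [← zero_add (n : ℝ), (f ^ k).map_add_nat]
    push_cast [n]
    linarith [pow_map_zero_le_add_two hle k]
  refine hfin 0 n ?_
  simpa using ENNReal.eq_top_of_forall_add_le (u := fun k => μ (S ((g ^ k) 0) ((f ^ k) n)))
    hδν fun k => by simpa only [pow_succ', mul_apply] using hstep _ _ (hgap k)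

section Annulus

variable {F : ℝ × ℝ → ℝ × ℝ} {φ φ₁ φ₂ : ℝ → ℝ}

lemma mem_planeGraph {p : ℝ × ℝ} : p ∈ planeGraph φ ↔ p.2 = φ p.1 := Iff.rfl

lemma apply_eq_of_image_planeGraph (h : F '' planeGraph φ = planeGraph φ) (x : ℝ) :
    F (x, φ x) = ((F (x, φ x)).1, φ (F (x, φ x)).1) :=
  Prod.ext rfl (h ▸ mem_image_of_mem F (mem_planeGraph.2 rfl) : F (x, φ x) ∈ planeGraph φ)

lemma fst_apply_graph_add_one (hper1 : ∀ x y : ℝ, (F (x + 1, y)).1 = (F (x, y)).1 + 1)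
    (hφ : Function.Periodic φ 1) (x : ℝ) : (F (x + 1, φ (x + 1))).1 = (F (x, φ x)).1 + 1 := by
  rw [hφ x, hper1]

lemma strictMono_fst_apply_graph (hF : Continuous F) (hinj : Function.Injective F)
    (hφ : Continuous φ) (hinv : F '' planeGraph φ = planeGraph φ)
    (h1 : ∀ x, (F (x + 1, φ (x + 1))).1 = (F (x, φ x)).1 + 1) :
    StrictMono fun x => (F (x, φ x)).1 := by
  refine strictMono_of_injective_of_map_add_one (by fun_prop) (fun u v huv => ?_) h1
  have : F (u, φ u) = F (v, φ v) := by
    rw [apply_eq_of_image_planeGraph hinv u, apply_eq_of_image_planeGraph hinv v,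
      show (F (u, φ u)).1 = (F (v, φ v)).1 from huv]
  exact congrArg Prod.fst (hinj this)

lemma mapsTo_regionBetween_univ {G : ℝ × ℝ → ℝ × ℝ} (hG : Continuous G)
    (hφ₁ : Continuous φ₁) (hφ₂ : Continuous φ₂) (hlt : ∀ x, φ₁ x < φ₂ x)
    (h₁ : G ⁻¹' planeGraph φ₁ = planeGraph φ₁) (h₂ : G ⁻¹' planeGraph φ₂ = planeGraph φ₂) :
    MapsTo G (regionBetween φ₁ φ₂ univ) (regionBetween φ₁ φ₂ univ) := by
  rintro ⟨x, y⟩ ⟨-, hy₁, hy₂⟩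
  dsimp only at hy₁ hy₂
  have hG₁ : (G (x, φ₁ x)).2 = φ₁ (G (x, φ₁ x)).1 := by
    rw [← mem_planeGraph, ← mem_preimage, h₁, mem_planeGraph]
  have hG₂ : (G (x, φ₂ x)).2 = φ₂ (G (x, φ₂ x)).1 := by
    rw [← mem_planeGraph, ← mem_preimage, h₂, mem_planeGraph]
  -- On the vertical line through `(x, y)`, `G` meets the graph of `φᵢ` only at height `φᵢ x`,
  -- so the height of `G` above (below) that graph keeps its sign above (below) `φᵢ x`.
  refine ⟨mem_univ _, sub_pos.1 ?_, sub_pos.1 ?_⟩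
  · refine pos_of_isPreconnected_of_ne_zero (u := fun s => (G (x, s)).2 - φ₁ (G (x, s)).1)
      isPreconnected_Ioi (by fun_prop) (fun s hs h0 => ?_) (hy₁.trans hy₂) hy₁ ?_
    · have : (x, s) ∈ G ⁻¹' planeGraph φ₁ := sub_eq_zero.1 h0
      rw [h₁] at this
      exact (mem_Ioi.1 hs).ne' this
    · simp only [hG₂, sub_pos, hlt]
  · refine pos_of_isPreconnected_of_ne_zero (u := fun s => φ₂ (G (x, s)).1 - (G (x, s)).2)
      isPreconnected_Iio (by fun_prop) (fun s hs h0 => ?_) (hy₁.trans hy₂) hy₂ ?_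
    · have : (x, s) ∈ G ⁻¹' planeGraph φ₂ := (sub_eq_zero.1 h0).symm
      rw [h₂] at this
      exact (mem_Iio.1 hs).ne this
    · simp only [hG₁, sub_pos, hlt]

lemma preimage_regionBetween_Ico_subset (htw : ∀ x, StrictMono fun y => (F (x, y)).1)
    (hregion : F ⁻¹' regionBetween φ₁ φ₂ univ ⊆ regionBetween φ₁ φ₂ univ)
    (hg₁ : Monotone fun x => (F (x, φ₁ x)).1) (hg₂ : Monotone fun x => (F (x, φ₂ x)).1)
    (x x' : ℝ) :
    F ⁻¹' regionBetween φ₁ φ₂ (Ico (F (x, φ₂ x)).1 (F (x', φ₁ x')).1) ⊆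
      regionBetween φ₁ φ₂ (Ico x x') := by
  rintro ⟨t, y⟩ ⟨⟨hx, hx'⟩, hy⟩
  obtain ⟨-, hy₁, hy₂⟩ := hregion ⟨mem_univ _, hy⟩
  exact ⟨⟨(hg₂.reflect_lt (hx.trans_lt (htw t hy₂))).le, hg₁.reflect_lt ((htw t hy₁).trans hx')⟩,
    hy₁, hy₂⟩

lemma disjoint_preimage_regionBetween_sub_const_Ico (htw : ∀ x, StrictMono fun y => (F (x, y)).1)
    (hg₁ : Monotone fun x => (F (x, φ₁ x)).1) {δ : ℝ}
    (hδ : ∀ t, (F (t + δ, φ₁ (t + δ))).1 ≤ (F (t, φ₂ t - δ)).1) (a x' : ℝ) :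
    Disjoint (F ⁻¹' regionBetween φ₁ φ₂ (Ico a (F (x', φ₁ x')).1))
      (regionBetween (fun t => φ₂ t - δ) φ₂ (Ico (x' - δ) x')) := by
  refine disjoint_left.2 fun ⟨t, y⟩ ⟨⟨_, hFx'⟩, _⟩ ⟨⟨ht, _⟩, hy, _⟩ => hFx'.not_ge ?_
  calc (F (x', φ₁ x')).1 ≤ (F (t + δ, φ₁ (t + δ))).1 := hg₁ (by linarith)
    _ ≤ (F (t, φ₂ t - δ)).1 := hδ t
    _ ≤ (F (t, y)).1 := (htw t hy).le

lemma regionBetween_sub_const_Ico_subset {δ x x' : ℝ} (hδ : ∀ t, φ₁ t ≤ φ₂ t - δ)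
    (hxx' : x + δ ≤ x') :
    regionBetween (fun t => φ₂ t - δ) φ₂ (Ico (x' - δ) x') ⊆ regionBetween φ₁ φ₂ (Ico x x') :=
  fun ⟨t, _⟩ ⟨⟨ht, ht'⟩, hy, hy'⟩ => ⟨⟨by linarith, ht'⟩, (hδ t).trans_lt hy, hy'⟩

lemma exists_band_width (hF : Continuous F)
    (hper1 : ∀ x y : ℝ, (F (x + 1, y)).1 = (F (x, y)).1 + 1)
    (htw : ∀ x, StrictMono fun y => (F (x, y)).1) (hφ₁ : Continuous φ₁) (hφ₂ : Continuous φ₂)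
    (hφ₁per : Function.Periodic φ₁ 1) (hφ₂per : Function.Periodic φ₂ 1)
    (hlt : ∀ x, φ₁ x < φ₂ x) :
    ∃ δ > 0, ∀ t, φ₁ t ≤ φ₂ t - δ ∧ (F (t + δ, φ₁ (t + δ))).1 ≤ (F (t, φ₂ t - δ)).1 := by
  obtain ⟨δ, hδ, h⟩ := exists_pos_forall_pos_of_periodic
    (h := fun p => min (φ₂ p.1 - p.2 - φ₁ p.1)
      ((F (p.1, φ₂ p.1 - p.2)).1 - (F (p.1 + p.2, φ₁ (p.1 + p.2))).1))
    (by fun_prop)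
    (fun s t => by
      simp only [add_right_comm t 1 s, hφ₁per t, hφ₁per (t + s), hφ₂per t, hper1]
      ring_nf)
    (fun t => lt_min (by simpa using hlt t) (by simpa using htw t (hlt t)))
  exact ⟨δ, hδ, fun t => ⟨by linarith [(h t).trans_le (min_le_left _ _)],
    by linarith [(h t).trans_le (min_le_right _ _)]⟩⟩

lemma measure_regionBetween_Ico_ne_top {μ : Measure (ℝ × ℝ)} [IsFiniteMeasureOnCompacts μ]
    (hφ₁ : Continuous φ₁) (hφ₂ : Continuous φ₂) (s t : ℝ) :
    μ (regionBetween φ₁ φ₂ (Ico s t)) ≠ ⊤ := by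
  have hst : IsCompact (Icc s t) := isCompact_Icc
  obtain ⟨c, hc⟩ := (hst.image hφ₁).bddBelow
  obtain ⟨C, hC⟩ := (hst.image hφ₂).bddAbove
  refine ((hst.prod (isCompact_Icc (a := c) (b := C))).measure_lt_top.trans_le'
    (measure_mono ?_)).ne
  rintro ⟨x, y⟩ ⟨hx, hy₁, hy₂⟩
  have hx' : x ∈ Icc s t := Ico_subset_Icc_self hx
  exact ⟨hx', (hc (mem_image_of_mem _ hx')).trans hy₁.le,
    hy₂.le.trans (hC (mem_image_of_mem _ hx'))⟩

lemma exists_measure_regionBetween_step (hF : Continuous F)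
    (hper1 : ∀ x y : ℝ, (F (x + 1, y)).1 = (F (x, y)).1 + 1)
    (htw : ∀ x, StrictMono fun y => (F (x, y)).1)
    (hregion : F ⁻¹' regionBetween φ₁ φ₂ univ ⊆ regionBetween φ₁ φ₂ univ)
    (hg₁ : Monotone fun x => (F (x, φ₁ x)).1) (hg₂ : Monotone fun x => (F (x, φ₂ x)).1)
    (hφ₁ : Continuous φ₁) (hφ₂ : Continuous φ₂)
    (hφ₁per : Function.Periodic φ₁ 1) (hφ₂per : Function.Periodic φ₂ 1)
    (hlt : ∀ x, φ₁ x < φ₂ x) {ρ : ℝ × ℝ → ℝ} (hρc : Continuous ρ) (hρpos : ∀ p, 0 < ρ p)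
    (hρper : ∀ x y : ℝ, ρ (x + 1, y) = ρ (x, y))
    (hpres : MeasurePreserving F (volume.withDensity (fun p => ENNReal.ofReal (ρ p)))
      (volume.withDensity (fun p => ENNReal.ofReal (ρ p)))) :
    ∃ δ : ℝ, ∃ δν ≠ 0, ∀ x x', x + δ ≤ x' →
      volume.withDensity (fun p => ENNReal.ofReal (ρ p))
          (regionBetween φ₁ φ₂ (Ico (F (x, φ₂ x)).1 (F (x', φ₁ x')).1)) + δν ≤
        volume.withDensity (fun p => ENNReal.ofReal (ρ p)) (regionBetween φ₁ φ₂ (Ico x x')) := by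
  obtain ⟨δ, hδ, hband⟩ := exists_band_width hF hper1 htw hφ₁ hφ₂ hφ₁per hφ₂per hlt
  obtain ⟨c, hc⟩ := (hφ₁per.isBounded_of_continuous one_ne_zero hφ₁).bddBelow
  obtain ⟨C, hC⟩ := (hφ₂per.isBounded_of_continuous one_ne_zero hφ₂).bddAbove
  obtain ⟨m, hm, hρm⟩ := exists_pos_forall_le_of_periodic_fst hρc hρpos (fun y x => hρper x y)
    (isCompact_Icc (a := c) (b := C))
  refine ⟨δ, ENNReal.ofReal m * (ENNReal.ofReal δ * ENNReal.ofReal δ), by positivity,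
    fun x x' hxx' => ?_⟩
  have hB : MeasurableSet (regionBetween (fun t => φ₂ t - δ) φ₂ (Ico (x' - δ) x')) :=
    measurableSet_regionBetween (by fun_prop) hφ₂.measurable measurableSet_Ico
  have hBμ : ENNReal.ofReal m * (ENNReal.ofReal δ * ENNReal.ofReal δ) ≤
      volume.withDensity (fun p => ENNReal.ofReal (ρ p))
        (regionBetween (fun t => φ₂ t - δ) φ₂ (Ico (x' - δ) x')) := by
    convert ofReal_mul_le_withDensity_ofReal hB fun p ⟨_, hy, hy'⟩ => hρm p
      ⟨(hc (mem_range_self _)).trans ((hband p.1).1.trans hy.le),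
        hy'.le.trans (hC (mem_range_self _))⟩ using 2
    rw [volume_regionBetween_sub_const_Ico hφ₂.measurable, sub_sub_cancel]
  calc _ ≤ _ := by gcongr
    _ ≤ _ := hpres.measure_add_le_of_preimage_subset
      (measurableSet_regionBetween hφ₁.measurable hφ₂.measurable measurableSet_Ico) hB
      (preimage_regionBetween_Ico_subset htw hregion hg₁ hg₂ x x')
      (regionBetween_sub_const_Ico_subset (fun t => (hband t).1) hxx')
      (disjoint_preimage_regionBetween_sub_const_Ico htw hg₁ (fun t => (hband t).2) _ x')

end Annulus

theorem poncelet_stmt2_general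
    (F Finv : ℝ × ℝ → ℝ × ℝ)
    (hF : ContDiff ℝ 1 F) (hFinv : ContDiff ℝ 1 Finv)
    (hleft : Function.LeftInverse Finv F) (hright : Function.RightInverse Finv F)
    (hper1 : ∀ x y : ℝ, (F (x + 1, y)).1 = (F (x, y)).1 + 1)
    (ρ : ℝ × ℝ → ℝ) (hρc : Continuous ρ) (hρpos : ∀ p : ℝ × ℝ, 0 < ρ p)
    (hρper : ∀ x y : ℝ, ρ (x + 1, y) = ρ (x, y))
    (hpres : MeasurePreserving F
      (volume.withDensity (fun p => ENNReal.ofReal (ρ p)))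
      (volume.withDensity (fun p => ENNReal.ofReal (ρ p))))
    (htwist : ∀ x y : ℝ, 0 < deriv (fun s : ℝ => (F (x, s)).1) y)
    (φ₁ φ₂ : ℝ → ℝ)
    (hφ₁c : Continuous φ₁) (hφ₂c : Continuous φ₂)
    (hφ₁per : ∀ x : ℝ, φ₁ (x + 1) = φ₁ x) (hφ₂per : ∀ x : ℝ, φ₂ (x + 1) = φ₂ x)
    (hφlt : ∀ x : ℝ, φ₁ x < φ₂ x)
    (hinv₁ : F '' planeGraph φ₁ = planeGraph φ₁)
    (hinv₂ : F '' planeGraph φ₂ = planeGraph φ₂)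
    (r₁ r₂ : ℝ)
    (hr₁ : ∀ x : ℝ, Tendsto
      (fun k : ℕ => ((fun x => (F (x, φ₁ x)).1)^[k] x - x) / k) atTop (nhds r₁))
    (hr₂ : ∀ x : ℝ, Tendsto
      (fun k : ℕ => ((fun x => (F (x, φ₂ x)).1)^[k] x - x) / k) atTop (nhds r₂)) :
    r₁ < r₂ := by
  have hFc : Continuous F := hF.continuous
  have htw : ∀ x, StrictMono fun y => (F (x, y)).1 := fun x => strictMono_of_deriv_pos (htwist x)
  have hregion : F ⁻¹' regionBetween φ₁ φ₂ univ ⊆ regionBetween φ₁ φ₂ univ := fun p hp =>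
    hleft p ▸ mapsTo_regionBetween_univ hFinv.continuous hφ₁c hφ₂c hφlt
      (by rw [← image_eq_preimage_of_inverse hleft hright, hinv₁])
      (by rw [← image_eq_preimage_of_inverse hleft hright, hinv₂]) hp
  have hg₁ := strictMono_fst_apply_graph hFc hleft.injective hφ₁c hinv₁
    (fst_apply_graph_add_one hper1 hφ₁per)
  have hg₂ := strictMono_fst_apply_graph hFc hleft.injective hφ₂c hinv₂
    (fst_apply_graph_add_one hper1 hφ₂per)
  let G₁ : CircleDeg1Lift := ⟨⟨_, hg₁.monotone⟩, fst_apply_graph_add_one hper1 hφ₁per⟩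
  let G₂ : CircleDeg1Lift := ⟨⟨_, hg₂.monotone⟩, fst_apply_graph_add_one hper1 hφ₂per⟩
  obtain ⟨δ, δν, hδν, hstep⟩ := exists_measure_regionBetween_step hFc hper1 htw hregion
    hg₁.monotone hg₂.monotone hφ₁c hφ₂c hφ₁per hφ₂per hφlt hρc hρpos hρper hpres
  have := IsLocallyFiniteMeasure.withDensity_ofReal (μ := volume) hρc
  rw [← G₁.translationNumber_eq_of_tendsto₀ (τ' := r₁) (by simpa [G₁] using hr₁ 0),
    ← G₂.translationNumber_eq_of_tendsto₀ (τ' := r₂) (by simpa [G₂] using hr₂ 0)]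
  exact G₁.translationNumber_lt_of_measure_step (fun s t => regionBetween φ₁ φ₂ (Ico s t)) G₂
    hδν (measure_regionBetween_Ico_ne_top hφ₁c hφ₂c) hstep

/-- For a C¹ twist diffeomorphism `F` of the plane commuting with the unit
horizontal translation and preserving a measure `ρ·λ` (with `ρ` continuous, positive and
1-periodic in `x`), if the graphs of two continuous 1-periodic functions `φ₁ < φ₂` are both
invariant under `F`, then the translation numbers of `g₁(x) = F₁(x, φ₁(x))` and
`g₂(x) = F₁(x, φ₂(x))` satisfy `r(g₁) < r(g₂)`. -/
theorem poncelet_stmt2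
    (F Finv : ℝ × ℝ → ℝ × ℝ)
    (hF : ContDiff ℝ 1 F) (hFinv : ContDiff ℝ 1 Finv)
    (hleft : Function.LeftInverse Finv F) (hright : Function.RightInverse Finv F)
    (hper1 : ∀ x y : ℝ, (F (x + 1, y)).1 = (F (x, y)).1 + 1)
    (hper2 : ∀ x y : ℝ, (F (x + 1, y)).2 = (F (x, y)).2)
    (ρ : ℝ × ℝ → ℝ) (hρc : Continuous ρ) (hρpos : ∀ p : ℝ × ℝ, 0 < ρ p)
    (hρper : ∀ x y : ℝ, ρ (x + 1, y) = ρ (x, y))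
    (hpres : MeasurePreserving F
      (volume.withDensity (fun p => ENNReal.ofReal (ρ p)))
      (volume.withDensity (fun p => ENNReal.ofReal (ρ p))))
    (htwist : ∀ x y : ℝ, 0 < deriv (fun s : ℝ => (F (x, s)).1) y)
    (φ₁ φ₂ : ℝ → ℝ)
    (hφ₁c : Continuous φ₁) (hφ₂c : Continuous φ₂)
    (hφ₁per : ∀ x : ℝ, φ₁ (x + 1) = φ₁ x) (hφ₂per : ∀ x : ℝ, φ₂ (x + 1) = φ₂ x)
    (hφlt : ∀ x : ℝ, φ₁ x < φ₂ x)
    (hinv₁ : F '' planeGraph φ₁ = planeGraph φ₁)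
    (hinv₂ : F '' planeGraph φ₂ = planeGraph φ₂)
    (r₁ r₂ : ℝ)
    (hr₁ : ∀ x : ℝ, Tendsto
      (fun k : ℕ => ((fun x => (F (x, φ₁ x)).1)^[k] x - x) / k) atTop (nhds r₁))
    (hr₂ : ∀ x : ℝ, Tendsto
      (fun k : ℕ => ((fun x => (F (x, φ₂ x)).1)^[k] x - x) / k) atTop (nhds r₂)) :
    r₁ < r₂ :=
  poncelet_stmt2_general F Finv hF hFinv hleft hright hper1 ρ hρc hρpos hρper hpres htwist φ₁ φ₂
    hφ₁c hφ₂c hφ₁per hφ₂per hφlt hinv₁ hinv₂ r₁ r₂ hr₁ hr₂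
end

section
/- Let g_t : ℝ → ℝ, a ≤ t ≤ b, be a family of strictly increasing homeomorphisms with g_t(x+1) = g_t(x) + 1 for all x and t, such that the partial derivative ∂g_t(x)/∂t exists, is continuous in (t,x), and is positive for all x ∈ ℝ, t ∈ [a,b]. Let r(t) denote the translation number of g_t. Then r : [a,b] → ℝ is continuous and monotone increasing; moreover, if a ≤ t₁ < t₂ ≤ b and at least one of r(t₁), r(t₂) is irrational, then r(t₁) < r(t₂). -/
open Filter Topology Set

private lemma aux_fract_dense {ρ : ℝ} (hρ : Irrational ρ) {δ : ℝ} (hδ : 0 < δ) (hδ1 : δ < 1) :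
    ∃ q : ℕ, 0 < q ∧ 1 - δ < Int.fract (q * ρ) := by
  set S : AddSubgroup ℝ := AddSubgroup.closure {1, ρ} with hS
  have hdense : Dense (S : Set ℝ) := by
    rcases S.dense_or_cyclic with h | ⟨c, hc⟩
    · exact h
    · exfalso
      have h1 : (1 : ℝ) ∈ S := AddSubgroup.subset_closure (by simp)
      have h2 : ρ ∈ S := AddSubgroup.subset_closure (by simp)
      rw [hc, AddSubgroup.mem_closure_singleton] at h1 h2
      obtain ⟨m, hm⟩ := h1
      obtain ⟨n, hn⟩ := h2
      have hm' : (m : ℝ) * c = 1 := by rw [← hm]; simp [zsmul_eq_mul]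
      have hn' : (n : ℝ) * c = ρ := by rw [← hn]; simp [zsmul_eq_mul]
      have hm0 : (m : ℝ) ≠ 0 := by
        intro h0; rw [h0, zero_mul] at hm'; norm_num at hm'
      refine hρ ⟨(n : ℚ) / (m : ℚ), ?_⟩
      have hmρ : (m : ℝ) * ρ = n := by
        rw [← hn']; rw [show (m : ℝ) * ((n:ℝ) * c) = (n:ℝ) * ((m:ℝ) * c) by ring, hm', mul_one]
      push_cast
      field_simp
      linarith [hmρ]
  obtain ⟨s, hsS, hs⟩ := hdense.exists_between (show (1:ℝ) - δ < 1 by linarith)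
  obtain ⟨m, n, hmn⟩ := AddSubgroup.mem_closure_pair.mp hsS
  have hmn' : (m : ℝ) + n * ρ = s := by
    rw [← hmn]; simp [zsmul_eq_mul]
  obtain ⟨hs1, hs2⟩ := hs
  have hs0 : 0 < s := by linarith
  rcases lt_trichotomy n 0 with hn | hn | hn
  · -- n < 0 : use the multiplication trick
    have hs10 : (0:ℝ) < 1 - s := by linarith
    have hfloor0 : (0:ℤ) ≤ ⌊(1 - δ) / (1 - s)⌋ :=
      Int.floor_nonneg.mpr (div_nonneg (by linarith) hs10.le)
    have htn : ((⌊(1 - δ) / (1 - s)⌋.toNat : ℕ) : ℝ) = ((⌊(1 - δ) / (1 - s)⌋ : ℤ) : ℝ) := by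
      rw [← Int.cast_natCast, Int.toNat_of_nonneg hfloor0]
    obtain ⟨N, hN0, hN1, hN2⟩ : ∃ N : ℕ, 0 < N ∧ 1 - δ < (N : ℝ) * (1 - s) ∧ (N : ℝ) * (1 - s) < 1 := by
      refine ⟨⌊(1 - δ) / (1 - s)⌋.toNat + 1, Nat.succ_pos _, ?_, ?_⟩
      · have h1 : (1 - δ) / (1 - s) < (⌊(1 - δ) / (1 - s)⌋ : ℝ) + 1 := Int.lt_floor_add_one _
        have h2 : (1 - δ) / (1 - s) * (1 - s) = 1 - δ := by field_simp
        have h3 : ((⌊(1 - δ) / (1 - s)⌋.toNat + 1 : ℕ) : ℝ) = (⌊(1 - δ) / (1 - s)⌋ : ℝ) + 1 := by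
          push_cast [htn]; ring
        rw [h3]
        nlinarith
      · have h1 : (⌊(1 - δ) / (1 - s)⌋ : ℝ) ≤ (1 - δ) / (1 - s) := Int.floor_le _
        have h2 : (1 - δ) / (1 - s) * (1 - s) = 1 - δ := by field_simp
        have h3 : ((⌊(1 - δ) / (1 - s)⌋.toNat + 1 : ℕ) : ℝ) = (⌊(1 - δ) / (1 - s)⌋ : ℝ) + 1 := by
          push_cast [htn]; ring
        rw [h3]
        nlinarith
    have hnρ : (n : ℝ) * ρ = s - m := by linarith
    have hnn : (((-n).toNat : ℕ) : ℝ) = -(n : ℝ) := by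
      rw [← Int.cast_natCast, Int.toNat_of_nonneg (by omega : (0:ℤ) ≤ -n)]
      push_cast; ring
    refine ⟨N * (-n).toNat, ?_, ?_⟩
    · have h4 : 0 < (-n).toNat := by omega
      exact Nat.mul_pos hN0 h4
    · have key : ((N * (-n).toNat : ℕ) : ℝ) * ρ = (N : ℝ) * (1 - s) + ((N * (m - 1) : ℤ) : ℝ) := by
        rw [Nat.cast_mul, hnn]
        push_cast
        linear_combination (-(N:ℝ)) * hnρ
      rw [key, Int.fract_add_intCast, Int.fract_eq_self.mpr ⟨by linarith, by linarith⟩]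
      exact hN1
  · -- n = 0 : contradiction
    exfalso
    rw [hn] at hmn'
    push_cast at hmn'
    have h0 : (0:ℝ) < m := by linarith
    have h1 : (0:ℤ) < m := by exact_mod_cast h0
    have h2' : (m:ℝ) < 1 := by linarith
    have h2 : m < 1 := by exact_mod_cast h2'
    omega
  · -- n > 0 : direct
    refine ⟨n.toNat, by omega, ?_⟩
    have htn : ((n.toNat : ℕ) : ℝ) = (n : ℝ) := by
      rw [← Int.cast_natCast, Int.toNat_of_nonneg hn.le]
    have hcast : ((n.toNat : ℕ) : ℝ) * ρ = s - ((m : ℤ) : ℝ) := by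
      rw [htn]; push_cast; linarith
    rw [hcast, Int.fract_sub_intCast, Int.fract_eq_self.mpr ⟨hs0.le, hs2⟩]
    exact hs1

private lemma aux_strict {f h : CircleDeg1Lift} (hfc : Continuous f) (hhc : Continuous h)
    (hlt : ∀ x, f x < h x) (hirr : Irrational f.translationNumber)
    (heq : f.translationNumber = h.translationNumber) : False := by
  -- minimal gap
  obtain ⟨x₀, hx₀mem, hx₀min⟩ :=
    (isCompact_Icc (a := (0:ℝ)) (b := 1)).exists_isMinOn (by norm_num)
      ((hhc.sub hfc).continuousOn)
  set δ : ℝ := min (h x₀ - f x₀) (1/2) with hδdef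
  have hδ0 : 0 < δ := lt_min (sub_pos.mpr (hlt x₀)) (by norm_num)
  have hδ1 : δ < 1 := lt_of_le_of_lt (min_le_right _ _) (by norm_num)
  have hgap : ∀ x, f x + δ ≤ h x := by
    intro x
    have hper : h x - f x = h (Int.fract x) - f (Int.fract x) := by
      have h1 := f.map_fract_sub_fract_eq x
      have h2 := h.map_fract_sub_fract_eq x
      linarith
    have hmem : Int.fract x ∈ Icc (0:ℝ) 1 := ⟨Int.fract_nonneg x, (Int.fract_lt_one x).le⟩
    have := hx₀min hmem
    simp only [Set.mem_setOf_eq] at this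
    have hmin : h x₀ - f x₀ ≤ h (Int.fract x) - f (Int.fract x) := this
    have : δ ≤ h x - f x := by
      rw [hper]
      exact le_trans (min_le_left _ _) hmin
    linarith
  -- iterate bound
  have hiter : ∀ n : ℕ, ∀ x, (⇑f)^[n + 1] x + δ ≤ (⇑h)^[n + 1] x := by
    intro n
    induction n with
    | zero => intro x; simpa using hgap x
    | succ n ih =>
      intro x
      have e1 : (⇑f)^[n + 1 + 1] x = f ((⇑f)^[n + 1] x) := Function.iterate_succ_apply' _ _ _
      have e2 : (⇑h)^[n + 1 + 1] x = h ((⇑h)^[n + 1] x) := Function.iterate_succ_apply' _ _ _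
      rw [e1, e2]
      have h1 : (⇑f)^[n + 1] x ≤ (⇑h)^[n + 1] x := by linarith [ih x]
      calc f ((⇑f)^[n+1] x) + δ ≤ f ((⇑h)^[n+1] x) + δ := by
            have := f.mono h1; linarith
      _ ≤ h ((⇑h)^[n+1] x) := hgap _
  set ρ : ℝ := f.translationNumber with hρdef
  obtain ⟨q, hq0, hqfr⟩ := aux_fract_dense hirr hδ0 hδ1
  -- upper bound on h^q
  have hτh : (h ^ q).translationNumber = q * ρ := by
    rw [CircleDeg1Lift.translationNumber_pow, ← heq]
  have hlt1 : (h ^ q).translationNumber < ((⌊(q:ℝ) * ρ⌋ + 1 : ℤ) : ℝ) := by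
    rw [hτh]; push_cast; exact Int.lt_floor_add_one _
  have hup := (h ^ q).map_lt_of_translationNumber_lt_int hlt1
  -- bound on f^q
  have hfq : (f ^ q).translationNumber ≤ (⌊(q:ℝ) * ρ⌋ : ℝ) + 1 - δ := by
    apply (f ^ q).translationNumber_le_of_le_add
    intro x
    have h1 : (f ^ q) x + δ ≤ (h ^ q) x := by
      obtain ⟨n, rfl⟩ : ∃ n, q = n + 1 := ⟨q - 1, by omega⟩
      simpa [CircleDeg1Lift.coe_pow] using hiter n x
    have h2 := hup x
    push_cast at h2
    linarith
  rw [CircleDeg1Lift.translationNumber_pow, ← hρdef] at hfq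
  have : Int.fract ((q:ℝ) * ρ) ≤ 1 - δ := by
    rw [Int.fract]
    linarith
  linarith

/-- **Proposition 1.** For a family `g_t`, `t ∈ [a,b]`, of degree-one lifts
satisfying the twist condition (the partial derivative `∂g_t(x)/∂t` exists, is jointly
continuous and positive), the translation-number function `r` is continuous and monotone
increasing on `[a,b]`; moreover if `t₁ < t₂` and `r(t₁)` or `r(t₂)` is irrational, then
`r(t₁) < r(t₂)`. -/
theorem poncelet_stmt4
    (a b : ℝ) (hab : a < b)
    (g : ℝ → ℝ → ℝ)
    (hmono : ∀ t ∈ Icc a b, StrictMono (g t))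
    (hcont : ∀ t ∈ Icc a b, Continuous (g t))
    (hsurj : ∀ t ∈ Icc a b, Function.Surjective (g t))
    (hper : ∀ t ∈ Icc a b, ∀ x : ℝ, g t (x + 1) = g t x + 1)
    (g' : ℝ → ℝ → ℝ)
    (hderiv : ∀ x : ℝ, ∀ t ∈ Icc a b,
      HasDerivWithinAt (fun s : ℝ => g s x) (g' t x) (Icc a b) t)
    (hg'cont : ContinuousOn (fun p : ℝ × ℝ => g' p.1 p.2) (Icc a b ×ˢ univ))
    (hg'pos : ∀ t ∈ Icc a b, ∀ x : ℝ, 0 < g' t x)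
    (r : ℝ → ℝ)
    (hr : ∀ t ∈ Icc a b, ∀ x : ℝ,
      Tendsto (fun k : ℕ => ((g t)^[k] x - x) / k) atTop (nhds (r t))) :
    ContinuousOn r (Icc a b) ∧ MonotoneOn r (Icc a b) ∧
      ∀ t₁ ∈ Icc a b, ∀ t₂ ∈ Icc a b, t₁ < t₂ →
        (Irrational (r t₁) ∨ Irrational (r t₂)) → r t₁ < r t₂ := by
  classical
  set F : ℝ → CircleDeg1Lift := fun t =>
    if ht : t ∈ Icc a b then ⟨⟨g t, (hmono t ht).monotone⟩, hper t ht⟩ else 1 with hF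
  have hFcoe : ∀ t ∈ Icc a b, ⇑(F t) = g t := by
    intro t ht
    simp only [hF, dif_pos ht]
    rfl
  have hτ : ∀ t ∈ Icc a b, (F t).translationNumber = r t := by
    intro t ht
    refine tendsto_nhds_unique ?_ (hr t ht 0)
    have h1 := (F t).tendsto_translationNumber 0
    simp only [CircleDeg1Lift.coe_pow] at h1
    rw [hFcoe t ht] at h1
    exact h1
  have hτpow : ∀ t ∈ Icc a b, ∀ q : ℕ, (F t ^ q).translationNumber = q * r t := by
    intro t ht q
    rw [CircleDeg1Lift.translationNumber_pow, hτ t ht]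
  -- strict pointwise monotonicity in t
  have hltpt : ∀ t₁ ∈ Icc a b, ∀ t₂ ∈ Icc a b, t₁ < t₂ → ∀ x, g t₁ x < g t₂ x := by
    intro t₁ h₁ t₂ h₂ h12 x
    have hs : StrictMonoOn (fun s => g s x) (Icc a b) := by
      apply strictMonoOn_of_deriv_pos (convex_Icc a b)
      · intro s hs
        exact (hderiv x s hs).continuousWithinAt
      · intro s hs
        rw [interior_Icc] at hs
        have hd : HasDerivAt (fun s => g s x) (g' s x) s :=
          (hderiv x s (Ioo_subset_Icc_self hs)).hasDerivAt (Icc_mem_nhds hs.1 hs.2)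
        rw [hd.deriv]
        exact hg'pos s (Ioo_subset_Icc_self hs) x
    exact hs h₁ h₂ h12
  have hle : ∀ t₁ ∈ Icc a b, ∀ t₂ ∈ Icc a b, t₁ ≤ t₂ → F t₁ ≤ F t₂ := by
    intro t₁ h₁ t₂ h₂ h12
    rcases eq_or_lt_of_le h12 with rfl | h12
    · exact le_refl _
    · intro x
      have := (hltpt t₁ h₁ t₂ h₂ h12 x).le
      rw [hFcoe t₁ h₁, hFcoe t₂ h₂]
      exact this
  have hmonoOn : MonotoneOn r (Icc a b) := by
    intro t₁ h₁ t₂ h₂ h12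
    rw [← hτ t₁ h₁, ← hτ t₂ h₂]
    exact CircleDeg1Lift.translationNumber_mono (hle t₁ h₁ t₂ h₂ h12)
  -- uniform derivative bound
  have hUD : UniqueDiffOn ℝ (Icc a b) := uniqueDiffOn_Icc hab
  have hg'per : ∀ t ∈ Icc a b, Function.Periodic (g' t) 1 := by
    intro t ht x
    have h1 : HasDerivWithinAt (fun s => g s (x + 1)) (g' t (x + 1)) (Icc a b) t :=
      hderiv (x + 1) t ht
    have h2 : HasDerivWithinAt (fun s => g s (x + 1)) (g' t x) (Icc a b) t := by
      have h3 := (hderiv x t ht).add_const 1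
      exact h3.congr (fun s hs => hper s hs x) (hper t ht x)
    rw [← h1.derivWithin (hUD t ht), ← h2.derivWithin (hUD t ht)]
  obtain ⟨M, hM⟩ : ∃ M, ∀ p ∈ Icc a b ×ˢ Icc (0:ℝ) 1, g' p.1 p.2 ≤ M := by
    have hcomp : IsCompact (Icc a b ×ˢ Icc (0:ℝ) 1) := isCompact_Icc.prod isCompact_Icc
    have hconts : ContinuousOn (fun p : ℝ × ℝ => g' p.1 p.2) (Icc a b ×ˢ Icc (0:ℝ) 1) :=
      hg'cont.mono (prod_mono_right (subset_univ _))
    rcases hcomp.exists_bound_of_continuousOn hconts with ⟨M, hMb⟩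
    exact ⟨M, fun p hp => (le_abs_self _).trans (by simpa [Real.norm_eq_abs] using hMb p hp)⟩
  have hMall : ∀ t ∈ Icc a b, ∀ x, g' t x ≤ M := by
    intro t ht x
    have hfr : g' t x = g' t (Int.fract x) := by
      have := (hg'per t ht).sub_int_mul_eq (x := x) ⌊x⌋
      simp only [mul_one] at this
      rw [Int.fract]
      exact this.symm
    rw [hfr]
    exact hM (t, Int.fract x) ⟨ht, ⟨Int.fract_nonneg x, (Int.fract_lt_one x).le⟩⟩
  -- Lipschitz in t, uniformly in x
  have hLip : ∀ x, ∀ t ∈ Icc a b, ∀ s ∈ Icc a b, |g t x - g s x| ≤ M * |t - s| := by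
    intro x t ht s hs
    have := (convex_Icc a b).norm_image_sub_le_of_norm_hasDerivWithin_le
      (f := fun u => g u x) (f' := fun u => g' u x) (C := M)
      (fun u hu => hderiv x u hu)
      (fun u hu => by
        rw [Real.norm_eq_abs, abs_of_pos (hg'pos u hu x)]
        exact hMall u hu x)
      hs ht
    simpa [Real.norm_eq_abs] using this
  -- continuity of iterates in t
  have hiterc : ∀ (q : ℕ) (x : ℝ), ∀ t₀ ∈ Icc a b,
      ContinuousWithinAt (fun t => (g t)^[q] x) (Icc a b) t₀ := by
    intro q x
    induction q with
    | zero =>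
      intro t₀ ht₀
      simpa using (continuousWithinAt_const : ContinuousWithinAt (fun _ : ℝ => x) (Icc a b) t₀)
    | succ q ih =>
      intro t₀ ht₀
      have hu : ContinuousWithinAt (fun t => (g t)^[q] x) (Icc a b) t₀ := ih t₀ ht₀
      set u : ℝ → ℝ := fun t => (g t)^[q] x with hudef
      have h2 : ContinuousWithinAt (fun t => g t₀ (u t)) (Icc a b) t₀ :=
        (hcont t₀ ht₀).continuousAt.comp_continuousWithinAt hu
      have h1 : Tendsto (fun t => g t (u t) - g t₀ (u t)) (𝓝[Icc a b] t₀) (𝓝 0) := by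
        rw [tendsto_zero_iff_norm_tendsto_zero]
        have hM0 : Tendsto (fun t : ℝ => M * |t - t₀|) (𝓝[Icc a b] t₀) (𝓝 0) := by
          have hc : Continuous fun t : ℝ => M * |t - t₀| := by
            exact continuous_const.mul (continuous_abs.comp (continuous_sub_right t₀))
          have hcw : Tendsto (fun t : ℝ => M * |t - t₀|) (𝓝[Icc a b] t₀)
              (𝓝 (M * |t₀ - t₀|)) := hc.continuousWithinAt
          simpa using hcw
        apply squeeze_zero' (Eventually.of_forall fun t => norm_nonneg _) ?_ hM0
        filter_upwards [self_mem_nhdsWithin] with t ht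
        simpa [Real.norm_eq_abs] using hLip (u t) t ht t₀ ht₀
      have hsum : Tendsto (fun t => g t (u t)) (𝓝[Icc a b] t₀) (𝓝 (g t₀ (u t₀))) := by
        have := h1.add h2
        simpa using this
      have : ContinuousWithinAt (fun t => g t ((g t)^[q] x)) (Icc a b) t₀ := hsum
      simpa [Function.iterate_succ_apply'] using this
  -- continuity of r
  have hcontr : ContinuousOn r (Icc a b) := by
    intro t₀ ht₀
    apply tendsto_order.2
    constructor
    · intro c hc
      obtain ⟨ξ, hξ1, hξ2⟩ := exists_rat_btwn hc
      set q : ℕ := ξ.den with hqdef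
      set p : ℤ := ξ.num with hpdef
      have hq : 0 < (q : ℝ) := by exact_mod_cast ξ.pos
      have hξ : (ξ : ℝ) = (p : ℝ) / (q : ℝ) := by rw [Rat.cast_def]
      have hlt1 : (p : ℝ) < (F t₀ ^ q).translationNumber := by
        rw [hτpow t₀ ht₀ q]
        rw [hξ, div_lt_iff₀ hq] at hξ2
        linarith
      have h0 := (F t₀ ^ q).lt_map_of_int_lt_translationNumber hlt1 0
      have h0' : (p : ℝ) < (g t₀)^[q] 0 := by
        simpa [CircleDeg1Lift.coe_pow, hFcoe t₀ ht₀] using h0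
      have hev : ∀ᶠ t in 𝓝[Icc a b] t₀, (p : ℝ) < (g t)^[q] 0 :=
        (hiterc q 0 t₀ ht₀).eventually (eventually_gt_nhds h0')
      filter_upwards [hev, self_mem_nhdsWithin] with t hpt ht
      have hτle : (p : ℝ) ≤ (F t ^ q).translationNumber := by
        apply (F t ^ q).le_translationNumber_of_add_int_le (x := 0)
        have : (p : ℝ) ≤ (g t)^[q] 0 := hpt.le
        simpa [CircleDeg1Lift.coe_pow, hFcoe t ht] using this
      rw [hτpow t ht q] at hτle
      have hfin : (p : ℝ) / q ≤ r t := by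
        rw [div_le_iff₀ hq]
        linarith
      calc c < (p : ℝ) / q := by rw [← hξ]; exact hξ1
        _ ≤ r t := hfin
    · intro c hc
      obtain ⟨ξ, hξ1, hξ2⟩ := exists_rat_btwn hc
      set q : ℕ := ξ.den with hqdef
      set p : ℤ := ξ.num with hpdef
      have hq : 0 < (q : ℝ) := by exact_mod_cast ξ.pos
      have hξ : (ξ : ℝ) = (p : ℝ) / (q : ℝ) := by rw [Rat.cast_def]
      have hlt1 : (F t₀ ^ q).translationNumber < (p : ℝ) := by
        rw [hτpow t₀ ht₀ q]
        rw [hξ, lt_div_iff₀ hq] at hξ1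
        linarith
      have h0 := (F t₀ ^ q).map_lt_of_translationNumber_lt_int hlt1 0
      have h0' : (g t₀)^[q] 0 < (p : ℝ) := by
        simpa [CircleDeg1Lift.coe_pow, hFcoe t₀ ht₀] using h0
      have hev : ∀ᶠ t in 𝓝[Icc a b] t₀, (g t)^[q] 0 < (p : ℝ) :=
        (hiterc q 0 t₀ ht₀).eventually (eventually_lt_nhds h0')
      filter_upwards [hev, self_mem_nhdsWithin] with t hpt ht
      have hτle : (F t ^ q).translationNumber ≤ (p : ℝ) := by
        apply (F t ^ q).translationNumber_le_of_le_add_int (x := 0)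
        have : (g t)^[q] 0 ≤ (p : ℝ) := hpt.le
        simpa [CircleDeg1Lift.coe_pow, hFcoe t ht] using this
      rw [hτpow t ht q] at hτle
      have hfin : r t ≤ (p : ℝ) / q := by
        rw [le_div_iff₀ hq]
        linarith
      calc r t ≤ (p : ℝ) / q := hfin
        _ < c := by rw [← hξ]; exact hξ2
  refine ⟨hcontr, hmonoOn, ?_⟩
  intro t₁ h₁ t₂ h₂ h12 hirr
  rcases lt_or_eq_of_le (hmonoOn h₁ h₂ h12.le) with h | h
  · exact h
  exfalso
  have heq : (F t₁).translationNumber = (F t₂).translationNumber := by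
    rw [hτ t₁ h₁, hτ t₂ h₂, h]
  have hirr' : Irrational (F t₁).translationNumber := by
    rw [hτ t₁ h₁]
    rcases hirr with h' | h'
    · exact h'
    · rwa [h]
  refine aux_strict ?_ ?_ ?_ hirr' heq
  · rw [hFcoe t₁ h₁]; exact hcont t₁ h₁
  · rw [hFcoe t₂ h₂]; exact hcont t₂ h₂
  · intro x
    have := hltpt t₁ h₁ t₂ h₂ h12 x
    rw [hFcoe t₁ h₁, hFcoe t₂ h₂]
    exact this
end

section
/- Let g₁, g₂ : ℝ → ℝ be continuous strictly increasing maps with gᵢ(x+1) = gᵢ(x) + 1 for all x (i = 1,2), and suppose g₁(x) < g₂(x) for all x ∈ ℝ; set α = inf_{x∈ℝ} (g₂(x) − g₁(x)) > 0. Let r₁, r₂ be the translation numbers of g₁, g₂. Suppose r₁ is irrational and p/q is a convergent of the continued fraction expansion of r₁ with p/q ≥ r₁ (an excess approximation) and q > 1/α. Then r₁ < p/q ≤ r₂. -/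
open Filter Topology Set

private lemma poncelet5_contsAux_int (v : ℝ) (k : ℕ) :
    (∃ a : ℤ, ((GenContFract.of v).contsAux k).a = a) ∧
    (∃ b : ℤ, ((GenContFract.of v).contsAux k).b = b) := by
  induction k using Nat.strong_induction_on with
  | _ k ih =>
    match k with
    | 0 => exact ⟨⟨1, by simp [GenContFract.contsAux]⟩, ⟨0, by simp [GenContFract.contsAux]⟩⟩
    | 1 =>
      refine ⟨⟨⌊v⌋, ?_⟩, ⟨1, by simp [GenContFract.contsAux]⟩⟩
      simp [GenContFract.contsAux, GenContFract.of_h_eq_floor]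
    | (k+2) =>
      cases hs : (GenContFract.of v).s.get? k with
      | none =>
        have h1 := ih (k+1) (by omega)
        simpa [GenContFract.contsAux, hs] using h1
      | some gp =>
        have ha := GenContFract.of_partNum_eq_one (GenContFract.partNum_eq_s_a hs)
        obtain ⟨z, hz⟩ := GenContFract.exists_int_eq_of_partDen (GenContFract.partDen_eq_s_b hs)
        obtain ⟨⟨a2, ha2⟩, ⟨b2, hb2⟩⟩ := ih k (by omega)
        obtain ⟨⟨a1, ha1⟩, ⟨b1, hb1⟩⟩ := ih (k+1) (by omega)
        refine ⟨⟨z*a1 + a2, ?_⟩, ⟨z*b1 + b2, ?_⟩⟩ <;>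
          simp [GenContFract.contsAux, hs, GenContFract.nextConts, GenContFract.nextNum,
            GenContFract.nextDen, ha, hz, ha1, ha2, hb1, hb2]

private lemma poncelet5_lift_int (g : ℝ → ℝ) (per : ∀ x, g (x + 1) = g x + 1) :
    ∀ (j : ℤ) (x : ℝ), g (x + j) = g x + j := by
  have hnat : ∀ (k : ℕ) (x : ℝ), g (x + k) = g x + k := by
    intro k
    induction k with
    | zero => simp
    | succ k ih =>
      intro x; push_cast
      rw [show x + ((k:ℝ)+1) = (x + k) + 1 by ring, per, ih]; ring
  intro j x
  cases j with
  | ofNat k => simpa using hnat k x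
  | negSucc k =>
    have e : ((Int.negSucc k : ℤ) : ℝ) = -((k:ℝ)+1) := by
      rw [Int.cast_negSucc]; push_cast; ring
    rw [e]
    have h1 := hnat (k+1) (x - ((k:ℝ)+1))
    push_cast at h1
    rw [show x - ((k:ℝ)+1) + ((k:ℝ)+1) = x by ring] at h1
    rw [show x + -((k:ℝ)+1) = x - ((k:ℝ)+1) by ring]
    linarith

private lemma poncelet5_trans_upper (g : ℝ → ℝ) (r : ℝ)
    (hr : Tendsto (fun k : ℕ => (g^[k] 0 - 0) / k) atTop (nhds r))
    (m : ℕ) (hm : 1 ≤ m) (c : ℝ) (h : ∀ x, g^[m] x ≤ x + c) :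
    (m : ℝ) * r ≤ c := by
  have key : ∀ k : ℕ, g^[m * k] 0 ≤ k * c := by
    intro k
    induction k with
    | zero => simp
    | succ k ihk =>
      have e : g^[m * (k+1)] 0 = g^[m] (g^[m*k] 0) := by
        rw [← Function.iterate_add_apply]; ring_nf
      rw [e]
      have := h (g^[m*k] 0)
      push_cast
      linarith
  have hsub : Tendsto (fun k : ℕ => (g^[m * k] 0 - 0) / ((m:ℝ) * k)) atTop (nhds r) := by
    have hmk : Tendsto (fun k : ℕ => m * k) atTop atTop :=
      tendsto_atTop_mono (fun k => Nat.le_mul_of_pos_left k (by omega)) tendsto_id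
    have := hr.comp hmk
    simpa [Function.comp_def, Nat.cast_mul] using this
  have hle : r ≤ c / m := by
    refine le_of_tendsto hsub ?_
    filter_upwards [eventually_ge_atTop 1] with k hk
    have hm0 : (0:ℝ) < (m:ℝ) := by positivity
    have hk0 : (0:ℝ) < (k:ℝ) := by exact_mod_cast Nat.pos_of_ne_zero (by omega)
    rw [div_le_div_iff₀ (by positivity) hm0]
    nlinarith [key k]
  have hm0 : (0:ℝ) < m := by positivity
  calc (m:ℝ) * r ≤ (m:ℝ) * (c / m) := by nlinarith
    _ = c := by field_simp

private lemma poncelet5_trans_lower (g : ℝ → ℝ) (hm' : StrictMono g)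
    (per : ∀ x, g (x + 1) = g x + 1) (r : ℝ) (x₀ : ℝ)
    (hr : Tendsto (fun k : ℕ => (g^[k] x₀ - x₀) / k) atTop (nhds r))
    (m : ℕ) (hm : 1 ≤ m) (P : ℤ) (h : x₀ + P ≤ g^[m] x₀) :
    (P : ℝ) ≤ m * r := by
  have perZ := poncelet5_lift_int g per
  have perIt : ∀ (t : ℕ) (j : ℤ) (x : ℝ), g^[t] (x + j) = g^[t] x + j := by
    intro t
    induction t with
    | zero => simp
    | succ t ih =>
      intro j x
      rw [Function.iterate_succ_apply', Function.iterate_succ_apply', ih, perZ]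
  have key : ∀ k : ℕ, x₀ + ((k : ℤ) * P : ℤ) ≤ g^[m * k] x₀ := by
    intro k
    induction k with
    | zero => simp
    | succ k ihk =>
      have step : g^[m] (x₀ + ((k:ℤ) * P : ℤ)) ≤ g^[m] (g^[m*k] x₀) :=
        (hm'.monotone.iterate m) ihk
      rw [perIt m ((k:ℤ)*P) x₀] at step
      have e : g^[m * (k+1)] x₀ = g^[m] (g^[m*k] x₀) := by
        rw [← Function.iterate_add_apply]; ring_nf
      rw [e]
      push_cast at step ⊢
      linarith [h]
  have hsub : Tendsto (fun k : ℕ => (g^[m * k] x₀ - x₀) / ((m:ℝ) * k)) atTop (nhds r) := by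
    have hmk : Tendsto (fun k : ℕ => m * k) atTop atTop :=
      tendsto_atTop_mono (fun k => Nat.le_mul_of_pos_left k (by omega)) tendsto_id
    simpa [Function.comp_def, Nat.cast_mul] using hr.comp hmk
  have hge : (P : ℝ) / m ≤ r := by
    refine ge_of_tendsto hsub ?_
    filter_upwards [eventually_ge_atTop 1] with k hk
    have hm0 : (0:ℝ) < (m:ℝ) := by positivity
    have hk0 : (0:ℝ) < (k:ℝ) := by exact_mod_cast Nat.pos_of_ne_zero (by omega)
    rw [div_le_div_iff₀ hm0 (by positivity)]
    have := key k
    push_cast at this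
    nlinarith
  have hm0 : (0:ℝ) < m := by positivity
  calc (P:ℝ) = (m:ℝ) * ((P:ℝ)/m) := by field_simp
    _ ≤ (m:ℝ) * r := by nlinarith

/-- **Lemma 1 b.** Let `g₁ < g₂` pointwise be degree-one lifts with
translation numbers `r₁, r₂`, and `α = inf (g₂ - g₁) > 0`. If `r₁` is irrational and
`p/q` is an excess continued-fraction convergent of `r₁` (i.e. `p/q ≥ r₁`) with
`q > 1/α`, then `r₁ < p/q ≤ r₂`. -/
theorem poncelet_stmt5
    (g₁ g₂ : ℝ → ℝ)
    (hg₁c : Continuous g₁) (hg₂c : Continuous g₂)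
    (hg₁m : StrictMono g₁) (hg₂m : StrictMono g₂)
    (hg₁per : ∀ x : ℝ, g₁ (x + 1) = g₁ x + 1)
    (hg₂per : ∀ x : ℝ, g₂ (x + 1) = g₂ x + 1)
    (hlt : ∀ x : ℝ, g₁ x < g₂ x)
    (α : ℝ) (hα : α = ⨅ x : ℝ, (g₂ x - g₁ x))
    (r₁ r₂ : ℝ)
    (hr₁ : ∀ x : ℝ, Tendsto (fun k : ℕ => (g₁^[k] x - x) / k) atTop (nhds r₁))
    (hr₂ : ∀ x : ℝ, Tendsto (fun k : ℕ => (g₂^[k] x - x) / k) atTop (nhds r₂))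
    (hirr : Irrational r₁)
    (n : ℕ) (p q : ℝ)
    (hp : p = (GenContFract.of r₁).nums n)
    (hq : q = (GenContFract.of r₁).dens n)
    (hexcess : r₁ ≤ p / q)
    (hqbig : 1 / α < q) :
    r₁ < p / q ∧ p / q ≤ r₂ := by
  -- the continued fraction of `r₁` never terminates
  have htnt : ∀ k, ¬(GenContFract.of r₁).TerminatedAt k := by
    intro k hk
    have hterm : (GenContFract.of r₁).Terminates := ⟨k, hk⟩
    rw [GenContFract.terminates_iff_rat] at hterm
    obtain ⟨ρ, hρ⟩ := hterm
    exact hirr ⟨ρ, hρ.symm⟩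
  -- `q ≥ 1`
  have hq1 : (1:ℝ) ≤ q := by
    rw [hq]
    have hfib : ((Nat.fib (n+1) : ℕ) : ℝ) ≤ (GenContFract.of r₁).dens n :=
      GenContFract.succ_nth_fib_le_of_nth_den (by
        rcases n with _ | n
        · exact Or.inl rfl
        · exact Or.inr (htnt _))
    have h1 : 1 ≤ Nat.fib (n+1) := Nat.fib_pos.2 n.succ_pos
    calc (1:ℝ) ≤ ((Nat.fib (n+1) : ℕ) : ℝ) := by exact_mod_cast h1
      _ ≤ _ := hfib
  have hq0 : (0:ℝ) < q := by linarith
  -- `p` and `q` are integers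
  obtain ⟨⟨P, hP⟩, ⟨Q, hQ⟩⟩ := poncelet5_contsAux_int r₁ (n+1)
  have hpP : p = (P : ℝ) := by
    rw [hp, GenContFract.num_eq_conts_a, GenContFract.nth_cont_eq_succ_nth_contAux, hP]
  have hqQ : q = (Q : ℝ) := by
    rw [hq, GenContFract.den_eq_conts_b, GenContFract.nth_cont_eq_succ_nth_contAux, hQ]
  -- `m` : the denominator as a natural number
  have hQ1 : 1 ≤ Q := by exact_mod_cast hq1.trans_eq hqQ
  set m : ℕ := Q.toNat with hm
  have hmQ : (m : ℤ) = Q := Int.toNat_of_nonneg (by omega)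
  have hm1 : 1 ≤ m := by omega
  have hqm : q = (m : ℝ) := by rw [hqQ]; exact_mod_cast congrArg (fun z : ℤ => (z : ℝ)) hmQ.symm
  -- `α > 0`
  have hαle : ∀ x, α ≤ g₂ x - g₁ x := by
    intro x
    rw [hα]
    exact ciInf_le ⟨0, fun y ⟨x', hx'⟩ => hx' ▸ (sub_nonneg.2 (hlt x').le)⟩ x
  have hαpos : 0 < α := by
    set f : ℝ → ℝ := fun x => g₂ x - g₁ x with hf
    have hfc : Continuous f := hg₂c.sub hg₁c
    have hfper : Function.Periodic f 1 := by
      intro x; simp only [hf, hg₁per, hg₂per]; ring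
    obtain ⟨x₀, _, hx₀min⟩ := isCompact_Icc.exists_isMinOn (α := ℝ) (s := Icc (0:ℝ) 1)
      ⟨0, by norm_num⟩ hfc.continuousOn
    have hlow : ∀ x, f x₀ ≤ f x := by
      intro x
      have hfr : f (Int.fract x) = f x := by
        have h := hfper.sub_int_mul_eq (x := x) ⌊x⌋
        rw [mul_one, Int.self_sub_floor] at h
        exact h
      have hmem : Int.fract x ∈ Icc (0:ℝ) 1 :=
        ⟨Int.fract_nonneg x, (Int.fract_lt_one x).le⟩
      calc f x₀ ≤ f (Int.fract x) := hx₀min hmem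
        _ = f x := hfr
    have : f x₀ ≤ α := by
      rw [hα]; exact le_ciInf hlow
    have : 0 < f x₀ := sub_pos.2 (hlt x₀)
    linarith [le_ciInf hlow (α := ℝ)]
  -- `1/q < α`
  have h1q : 1 / q < α := by
    rw [div_lt_iff₀ hq0]
    rw [div_lt_iff₀ hαpos] at hqbig
    nlinarith
  -- the convergent estimate: `p - q * r₁ ≤ 1/q`
  have hqr : p - q * r₁ ≤ 1 / q := by
    have habs := GenContFract.abs_sub_convs_le (v := r₁) (n := n) (htnt n)
    have hconv : (GenContFract.of r₁).convs n = p / q := by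
      rw [GenContFract.conv_eq_num_div_den, hp, hq]
    rw [hconv, ← hq] at habs
    have hd1 : q ≤ (GenContFract.of r₁).dens (n+1) := hq ▸ GenContFract.of_den_mono
    have hd0 : (0:ℝ) < (GenContFract.of r₁).dens (n+1) := lt_of_lt_of_le hq0 hd1
    have h2 : p / q - r₁ ≤ 1 / (q * (GenContFract.of r₁).dens (n+1)) := by
      calc p / q - r₁ ≤ |r₁ - p / q| := by rw [abs_sub_comm]; exact le_abs_self _
        _ ≤ _ := habs
    have h3 : 1 / (q * (GenContFract.of r₁).dens (n+1)) ≤ 1 / (q * q) := by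
      apply one_div_le_one_div_of_le (by positivity)
      nlinarith
    have h4 : p / q - r₁ ≤ 1 / (q * q) := h2.trans h3
    have := mul_le_mul_of_nonneg_left h4 hq0.le
    calc p - q * r₁ = q * (p / q - r₁) := by field_simp
      _ ≤ q * (1 / (q * q)) := this
      _ = 1 / q := by field_simp
  -- first part: `r₁ < p/q`
  have hne : r₁ ≠ p / q := by
    intro h
    obtain ⟨Pq, hPq⟩ := GenContFract.exists_rat_eq_nth_num r₁ n
    obtain ⟨Qq, hQq⟩ := GenContFract.exists_rat_eq_nth_den r₁ n
    refine hirr ⟨Pq / Qq, ?_⟩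
    rw [h, hp, hq, hPq, hQq]
    push_cast
    ring
  have part1 : r₁ < p / q := lt_of_le_of_ne hexcess hne
  refine ⟨part1, ?_⟩
  -- key claim: there is `x₀` with `x₀ + p ≤ g₂^[m] x₀`
  have hiter_le : ∀ (t : ℕ) (x : ℝ), g₁^[t] x ≤ g₂^[t] x := by
    intro t
    induction t with
    | zero => intro x; simp
    | succ t ih =>
      intro x
      rw [Function.iterate_succ_apply', Function.iterate_succ_apply']
      calc g₁ (g₁^[t] x) ≤ g₁ (g₂^[t] x) := hg₁m.monotone (ih x)
        _ ≤ g₂ (g₂^[t] x) := (hlt _).le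
  have hexists : ∃ x₀ : ℝ, x₀ + (P : ℝ) ≤ g₂^[m] x₀ := by
    by_contra hcon
    push_neg at hcon
    -- then `g₁^[m] x ≤ x + (p - α)` for all `x`
    have hup : ∀ x, g₁^[m] x ≤ x + (p - α) := by
      intro x
      have h1 : g₁^[m] x + α ≤ g₂^[m] x := by
        rcases Nat.exists_eq_add_of_le hm1 with ⟨t, ht⟩
        have hmt : m = t + 1 := by omega
        rw [hmt, Function.iterate_succ_apply', Function.iterate_succ_apply']
        calc g₁ (g₁^[t] x) + α ≤ g₁ (g₂^[t] x) + α := by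
              linarith [hg₁m.monotone (hiter_le t x)]
          _ ≤ g₂ (g₂^[t] x) := by linarith [hαle (g₂^[t] x)]
      have h2 : g₂^[m] x < x + p := by
        have := hcon x
        rw [hpP]; linarith [hcon x]
      linarith
    have := poncelet5_trans_upper g₁ r₁ (hr₁ 0) m hm1 (p - α) hup
    rw [← hqm] at this
    -- but `q * r₁ > p - α`
    nlinarith
  obtain ⟨x₀, hx₀⟩ := hexists
  have hPle : (P : ℝ) ≤ m * r₂ :=
    poncelet5_trans_lower g₂ hg₂m hg₂per r₂ x₀ (hr₂ x₀) m hm1 P hx₀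
  rw [← hqm, ← hpP] at hPle
  rw [div_le_iff₀ hq0]
  nlinarith
end

section
/- Let g₁, g₂ : ℝ → ℝ be continuous strictly increasing maps with gᵢ(x+1) = gᵢ(x) + 1 for all x (i = 1,2), and suppose g₁(x) < g₂(x) for all x ∈ ℝ; set α = inf_{x∈ℝ} (g₂(x) − g₁(x)) > 0. Let r₁, r₂ be the translation numbers of g₁, g₂. Suppose r₂ is irrational and p'/q' is a convergent of the continued fraction expansion of r₂ with p'/q' ≤ r₂ (a defect approximation) and q' > 1/α. Then r₁ ≤ p'/q' < r₂. -/
open Filter Topology Set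

/-!
The convergent satisfies `|q' r₂ - p'| ≤ 1/q' < α`. As `g₂^q'` is continuous, some `x₀` has
`g₂^q' x₀ = x₀ + q' r₂`, and iterating `g₁ + α ≤ g₂` with `g₁` monotone gives
`g₁^q' x₀ + α ≤ g₂^q' x₀ < x₀ + p' + α`. A degree-one lift moving a single point by at most the
integer `p'` has translation number at most `p'`, so `q' r₁ ≤ p'`. The strict inequality
`p'/q' < r₂` is the irrationality of `r₂`.
-/

namespace GenContFract

variable {K : Type*} [Field K] [LinearOrder K] [FloorRing K]

theorem exists_int_eq_contsAux (v : K) :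
    ∀ n, ∃ a b : ℤ, (GenContFract.of v).contsAux n = ⟨a, b⟩
  | 0 => ⟨1, 0, by simp [zeroth_contAux_eq_one_zero]⟩
  | 1 => ⟨⌊v⌋, 1, by simp [first_contAux_eq_h_one, of_h_eq_floor]⟩
  | n + 2 => by
    obtain ⟨a₀, b₀, h₀⟩ := exists_int_eq_contsAux v n
    obtain ⟨a₁, b₁, h₁⟩ := exists_int_eq_contsAux v (n + 1)
    cases hs : (GenContFract.of v).s.get? n with
    | none => exact ⟨a₁, b₁, by rw [contsAux_stable_step_of_terminated hs, h₁]⟩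
    | some gp =>
      obtain ⟨ha, z, hz⟩ := of_partNum_eq_one_and_exists_int_partDen_eq hs
      refine ⟨z * a₁ + a₀, z * b₁ + b₀, ?_⟩
      rw [contsAux_recurrence hs h₀ h₁, ha, hz]
      simp only [one_mul, add_comm, Int.cast_add, Int.cast_mul]

theorem exists_int_eq_nums_dens (v : K) (n : ℕ) :
    ∃ p q : ℤ, (GenContFract.of v).nums n = p ∧ (GenContFract.of v).dens n = q := by
  obtain ⟨p, q, h⟩ := exists_int_eq_contsAux v (n + 1)
  exact ⟨p, q, by rw [num_eq_conts_a, nth_cont_eq_succ_nth_contAux, h],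
    by rw [den_eq_conts_b, nth_cont_eq_succ_nth_contAux, h]⟩

theorem abs_dens_mul_sub_nums_le [IsStrictOrderedRing K] {v : K} {n : ℕ}
    (hn : ¬(GenContFract.of v).TerminatedAt n) :
    |(GenContFract.of v).dens n * v - (GenContFract.of v).nums n| ≤
      ((GenContFract.of v).dens n)⁻¹ := by
  set g := GenContFract.of v
  have hq : 0 < g.dens n :=
    lt_of_lt_of_le (mod_cast Nat.fib_pos.2 n.succ_pos)
      (succ_nth_fib_le_of_nth_den (Or.inr (mt (terminated_stable (n.sub_le 1)) hn)))
  calc |g.dens n * v - g.nums n| = g.dens n * |v - g.convs n| := by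
        rw [conv_eq_num_div_den, ← abs_of_pos hq, ← abs_mul, abs_of_pos hq, mul_sub,
          mul_div_cancel₀ _ hq.ne']
    _ ≤ g.dens n * (1 / (g.dens n * g.dens (n + 1))) :=
        mul_le_mul_of_nonneg_left (abs_sub_convs_le hn) hq.le
    _ = (g.dens (n + 1))⁻¹ := by field_simp
    _ ≤ (g.dens n)⁻¹ := inv_anti₀ hq of_den_mono

end GenContFract

theorem Function.Periodic.iInf_pos_of_continuous {φ : ℝ → ℝ} {c : ℝ} (hp : φ.Periodic c)
    (hc : c ≠ 0) (hφ : Continuous φ) (hpos : ∀ x, 0 < φ x) : 0 < ⨅ x, φ x := by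
  obtain ⟨x, hx⟩ := (hp.compact_of_continuous hc hφ).sInf_mem (range_nonempty φ)
  rw [iInf, ← hx]
  exact hpos x

namespace CircleDeg1Lift

theorem translationNumber_eq_of_tendsto (f : CircleDeg1Lift) {r : ℝ} (x : ℝ)
    (h : Tendsto (fun k : ℕ => (f^[k] x - x) / k) atTop (𝓝 r)) : f.translationNumber = r :=
  tendsto_nhds_unique (by simpa only [coe_pow] using f.tendsto_translationNumber x) h

theorem pow_apply_add_le_of_add_le {f g : CircleDeg1Lift} {α : ℝ} (hα : 0 ≤ α)
    (hfg : ∀ x, f x + α ≤ g x) {n : ℕ} (hn : n ≠ 0) (x : ℝ) : (f ^ n) x + α ≤ (g ^ n) x := by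
  obtain ⟨n, rfl⟩ := Nat.exists_eq_succ_of_ne_zero hn
  have hle : (f ^ n) x ≤ (g ^ n) x := pow_mono (fun y => by linarith [hfg y]) n x
  rw [pow_succ', pow_succ', mul_apply, mul_apply]
  linarith [f.mono hle, hfg ((g ^ n) x)]

theorem translationNumber_le_div_of_add_le {f g : CircleDeg1Lift} (hg : Continuous g) {α : ℝ}
    (hα : 0 ≤ α) (hfg : ∀ x, f x + α ≤ g x) {p : ℤ} {q : ℕ} (hq : q ≠ 0)
    (hpq : q * g.translationNumber < p + α) : f.translationNumber ≤ p / q := by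
  obtain ⟨x, hx⟩ := (g ^ q).exists_eq_add_translationNumber (g.continuous_pow hg q)
  have hfx : (f ^ q) x ≤ x + p := by
    linarith [pow_apply_add_le_of_add_le hα hfg hq x, g.translationNumber_pow q]
  rw [le_div_iff₀ (by positivity), mul_comm, ← translationNumber_pow]
  exact translationNumber_le_of_le_add_int _ hfx

end CircleDeg1Lift

/-- **Lemma 1 c.** Let `g₁ < g₂` pointwise be degree-one lifts with
translation numbers `r₁, r₂`, and `α = inf (g₂ - g₁) > 0`. If `r₂` is irrational and
`p'/q'` is a defect continued-fraction convergent of `r₂` (i.e. `p'/q' ≤ r₂`) with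
`q' > 1/α`, then `r₁ ≤ p'/q' < r₂`. -/
theorem poncelet_stmt6
    (g₁ g₂ : ℝ → ℝ)
    (hg₁c : Continuous g₁) (hg₂c : Continuous g₂)
    (hg₁m : StrictMono g₁) (hg₂m : StrictMono g₂)
    (hg₁per : ∀ x : ℝ, g₁ (x + 1) = g₁ x + 1)
    (hg₂per : ∀ x : ℝ, g₂ (x + 1) = g₂ x + 1)
    (hlt : ∀ x : ℝ, g₁ x < g₂ x)
    (α : ℝ) (hα : α = ⨅ x : ℝ, (g₂ x - g₁ x))
    (r₁ r₂ : ℝ)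
    (hr₁ : ∀ x : ℝ, Tendsto (fun k : ℕ => (g₁^[k] x - x) / k) atTop (nhds r₁))
    (hr₂ : ∀ x : ℝ, Tendsto (fun k : ℕ => (g₂^[k] x - x) / k) atTop (nhds r₂))
    (hirr : Irrational r₂)
    (n : ℕ) (p' q' : ℝ)
    (hp' : p' = (GenContFract.of r₂).nums n)
    (hq' : q' = (GenContFract.of r₂).dens n)
    (hdefect : p' / q' ≤ r₂)
    (hq'big : 1 / α < q') :
    r₁ ≤ p' / q' ∧ p' / q' < r₂ := by
  let f₁ : CircleDeg1Lift := ⟨⟨g₁, hg₁m.monotone⟩, hg₁per⟩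
  let f₂ : CircleDeg1Lift := ⟨⟨g₂, hg₂m.monotone⟩, hg₂per⟩
  have hα_pos : 0 < α := hα ▸ Function.Periodic.iInf_pos_of_continuous
    (fun x => by simp only [hg₁per, hg₂per]; ring) one_ne_zero (hg₂c.sub hg₁c)
    (fun x => sub_pos.2 (hlt x))
  have hgap : ∀ x, f₁ x + α ≤ f₂ x := fun x => by
    have hbdd : BddBelow (range fun y => g₂ y - g₁ y) :=
      ⟨0, by rintro _ ⟨y, rfl⟩; exact (sub_pos.2 (hlt y)).le⟩
    have : α ≤ g₂ x - g₁ x := hα ▸ ciInf_le hbdd x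
    change g₁ x + α ≤ g₂ x
    linarith
  have hnt : ¬(GenContFract.of r₂).TerminatedAt n := fun h =>
    (GenContFract.terminates_iff_rat r₂).1 ⟨n, h⟩ |>.elim fun q hq => hirr ⟨q, hq.symm⟩
  have happrox := GenContFract.abs_dens_mul_sub_nums_le hnt
  obtain ⟨p, q, hp, hq⟩ := GenContFract.exists_int_eq_nums_dens r₂ n
  rw [← hp', ← hq'] at happrox
  obtain rfl : p' = p := hp'.trans hp
  obtain rfl : q' = q := hq'.trans hq
  have hq_pos : (0 : ℝ) < q := (one_div_pos.2 hα_pos).trans hq'big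
  lift q to ℕ using (by exact_mod_cast hq_pos.le)
  simp only [Int.cast_natCast] at hq'big hdefect happrox hq_pos
  have hqr₂ : q * r₂ < p + α := by
    have : (q : ℝ)⁻¹ < α := by rwa [← one_div, one_div_lt hq_pos hα_pos]
    linarith [(abs_le.1 happrox).2]
  refine ⟨?_, hdefect.lt_of_ne fun h => hirr ⟨p / q, by push_cast; exact h⟩⟩
  rw [← f₁.translationNumber_eq_of_tendsto 0 (hr₁ 0)]
  refine f₁.translationNumber_le_div_of_add_le hg₂c hα_pos.le hgap
    (Nat.cast_ne_zero.1 hq_pos.ne') ?_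
  rwa [f₂.translationNumber_eq_of_tendsto 0 (hr₂ 0)]
end

section
/- For every irrational x ∈ (0,1) and every n ≥ 1, the denominators of the continued fraction convergents of x satisfy −2F − log(Tⁿ(x)) ≤ log(q_{n+1}(x)/q_n(x)) ≤ 2F − log(Tⁿ(x)), equivalently e^{−2F} ≤ (q_{n+1}(x)/q_n(x))·Tⁿ(x) ≤ e^{2F}, where T is the Gauss map and F is the reciprocal Fibonacci constant. -/
open Filter Topology Set Real

/-- The Gauss map `T(x) = 1/x − ⌊1/x⌋` (with `T(0) = 0`). -/
noncomputable def gaussMap (x : ℝ) : ℝ := if x = 0 then 0 else Int.fract x⁻¹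

/-- The reciprocal Fibonacci constant `F = ∑_{n ≥ 1} 1/fib(n)`. -/
noncomputable def recipFibConst : ℝ := ∑' n : ℕ, 1 / (Nat.fib (n + 1) : ℝ)

lemma aux_pow_half_le_fib : ∀ n : ℕ, 2 ^ (n / 2) ≤ Nat.fib (n + 1)
  | 0 => le_refl 1
  | 1 => by norm_num
  | (n+2) => by
      have ih := aux_pow_half_le_fib n
      have h1 : Nat.fib (n+1) ≤ Nat.fib (n+2) := Nat.fib_le_fib_succ
      have h2 : (n+2)/2 = n/2 + 1 := by omega
      rw [h2, pow_succ]
      calc 2^(n/2) * 2 = 2^(n/2) + 2^(n/2) := by ring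
        _ ≤ Nat.fib (n+1) + Nat.fib (n+2) := Nat.add_le_add ih (ih.trans h1)
        _ = Nat.fib (n+3) := (Nat.fib_add_two (n := n+1)).symm

lemma aux_summable : Summable (fun n : ℕ => 1 / (Nat.fib (n + 1) : ℝ)) := by
  apply summable_of_sum_range_le (c := 4) (fun n => by positivity)
  intro n
  have key : ∀ m : ℕ, ∑ i ∈ Finset.range (2*m), ((1:ℝ)/2) ^ (i/2)
      = 2 * ∑ j ∈ Finset.range m, ((1:ℝ)/2)^j := by
    intro m
    induction m with
    | zero => simp
    | succ m ih =>
      have h : 2*(m+1) = (2*m)+1+1 := by ring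
      rw [h, Finset.sum_range_succ, Finset.sum_range_succ, ih, Finset.sum_range_succ]
      have h1 : (2*m)/2 = m := by omega
      have h2 : (2*m+1)/2 = m := by omega
      rw [h1, h2]; ring
  calc ∑ i ∈ Finset.range n, 1 / (Nat.fib (i+1) : ℝ)
      ≤ ∑ i ∈ Finset.range n, ((1:ℝ)/2)^(i/2) := by
        apply Finset.sum_le_sum
        intro i _
        rw [one_div_pow]
        exact one_div_le_one_div_of_le (by positivity)
          (by exact_mod_cast aux_pow_half_le_fib i)
    _ ≤ ∑ i ∈ Finset.range (2*n), ((1:ℝ)/2)^(i/2) := by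
        apply Finset.sum_le_sum_of_subset_of_nonneg
        · exact Finset.range_subset_range.mpr (by omega)
        · intro i _ _; positivity
    _ = 2 * ∑ j ∈ Finset.range n, ((1:ℝ)/2)^j := key n
    _ ≤ 2 * 2 := by
        have := sum_geometric_two_le n
        linarith
    _ = 4 := by norm_num

lemma one_le_recipFibConst : 1 ≤ recipFibConst := by
  have h := Summable.le_tsum aux_summable 0 (fun j _ => by positivity)
  simpa [recipFibConst] using h

lemma aux_stream_some (x : ℝ) (hirr : Irrational x) (n : ℕ) :
    ∃ p, GenContFract.IntFractPair.stream x n = some p := by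
  have hterm : ¬(GenContFract.of x).Terminates := by
    intro h
    obtain ⟨q, hq⟩ := (GenContFract.terminates_iff_rat x).mp h
    exact hirr ⟨q, hq.symm⟩
  cases n with
  | zero => exact ⟨_, GenContFract.IntFractPair.stream_zero x⟩
  | succ k =>
    have hk : ¬(GenContFract.of x).TerminatedAt k := fun hk => hterm ⟨k, hk⟩
    rw [GenContFract.of_terminatedAt_n_iff_succ_nth_intFractPair_stream_eq_none] at hk
    exact Option.ne_none_iff_exists'.mp hk

lemma aux_stream_fr (x : ℝ) (hx : x ∈ Set.Ioo (0:ℝ) 1) :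
    ∀ n p, GenContFract.IntFractPair.stream x n = some p → p.fr = gaussMap^[n] x := by
  intro n
  induction n with
  | zero =>
    intro p hp
    rw [GenContFract.IntFractPair.stream_zero] at hp
    have : GenContFract.IntFractPair.of x = p := by injection hp
    rw [← this]
    simp [GenContFract.IntFractPair.of, Int.fract_eq_self.mpr ⟨hx.1.le, hx.2⟩]
  | succ n ih =>
    intro p hp
    obtain ⟨q, hq, hfr, hof⟩ := GenContFract.IntFractPair.succ_nth_stream_eq_some_iff.mp hp
    have hih := ih q hq
    rw [Function.iterate_succ_apply', ← hih, ← hof]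
    simp [GenContFract.IntFractPair.of, gaussMap, hfr]

/-- **Lemma 2, key inequality.** For every irrational `x ∈ (0,1)` and every
`n ≥ 1`, the continued-fraction denominators satisfy
`e^{−2F} ≤ (q_{n+1}(x)/q_n(x)) · Tⁿ(x) ≤ e^{2F}`,
where `T` is the Gauss map and `F` the reciprocal Fibonacci constant. -/
theorem poncelet_stmt7
    (x : ℝ) (hirr : Irrational x) (hx : x ∈ Ioo (0 : ℝ) 1)
    (n : ℕ) (hn : 1 ≤ n) :
    exp (-(2 * recipFibConst)) ≤
        ((GenContFract.of x).dens (n + 1) / (GenContFract.of x).dens n) * gaussMap^[n] x ∧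
      ((GenContFract.of x).dens (n + 1) / (GenContFract.of x).dens n) * gaussMap^[n] x ≤
        exp (2 * recipFibConst) := by
  obtain ⟨m, rfl⟩ : ∃ m, n = m + 1 := ⟨n - 1, by omega⟩
  set n := m + 1 with hn_def
  set g := GenContFract.of x with hg
  -- stream values
  obtain ⟨pn, hpn⟩ := aux_stream_some x hirr n
  obtain ⟨pn1, hpn1⟩ := aux_stream_some x hirr (n+1)
  obtain ⟨pn2, hpn2⟩ := aux_stream_some x hirr (n+2)
  -- fr values
  have hfrn : pn.fr = gaussMap^[n] x := aux_stream_fr x hx n pn hpn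
  have hfrn1 : pn1.fr = gaussMap^[n+1] x := aux_stream_fr x hx (n+1) pn1 hpn1
  -- fr ≠ 0
  obtain ⟨q, hq, hqne, hqof⟩ := GenContFract.IntFractPair.succ_nth_stream_eq_some_iff.mp hpn1
  have hqn : q = pn := by rw [hq] at hpn; injection hpn
  rw [hqn] at hqne hqof
  obtain ⟨q2, hq2, hq2ne, -⟩ := GenContFract.IntFractPair.succ_nth_stream_eq_some_iff.mp hpn2
  have hq2n : q2 = pn1 := by rw [hq2] at hpn1; injection hpn1
  rw [hq2n] at hq2ne
  -- bounds on fr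
  have hy0 : 0 < pn.fr :=
    ((GenContFract.IntFractPair.nth_stream_fr_nonneg hpn).lt_of_ne' hqne)
  have hy1 : pn.fr < 1 := GenContFract.IntFractPair.nth_stream_fr_lt_one hpn
  have ht0 : 0 < pn1.fr :=
    ((GenContFract.IntFractPair.nth_stream_fr_nonneg hpn1).lt_of_ne' hq2ne)
  have ht1 : pn1.fr < 1 := GenContFract.IntFractPair.nth_stream_fr_lt_one hpn1
  set y := pn.fr with hy
  set t := pn1.fr with ht
  set B : ℝ := (pn1.b : ℝ) with hB
  have hB1 : (1:ℝ) ≤ B := by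
    rw [hB]
    exact_mod_cast GenContFract.IntFractPair.one_le_succ_nth_stream_b hpn1
  -- key identity y⁻¹ = B + t
  have hkey : y⁻¹ = B + t := by
    have hb : pn1.b = ⌊y⁻¹⌋ := by rw [← hqof]; rfl
    have hf : t = Int.fract y⁻¹ := by rw [ht, ← hqof]; rfl
    rw [hB, hb, hf]
    exact (Int.floor_add_fract y⁻¹).symm
  have hyv : y = (B + t)⁻¹ := by
    rw [← hkey, inv_inv]
  -- sequence entry
  have hs : g.s.get? n = some ⟨1, B⟩ :=
    GenContFract.get?_of_eq_some_of_succ_get?_intFractPair_stream hpn1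
  -- denominators
  have hnt : ∀ k, ¬g.TerminatedAt k := by
    intro k hk
    have hterm : ¬g.Terminates := by
      intro h
      obtain ⟨qq, hqq⟩ := (GenContFract.terminates_iff_rat x).mp h
      exact hirr ⟨qq, hqq.symm⟩
    exact hterm ⟨k, hk⟩
  have hrec : g.dens (n + 1) = B * g.dens n + 1 * g.dens m :=
    GenContFract.dens_recurrence (gp := ⟨1, B⟩) hs rfl rfl
  have hqm0 : (0:ℝ) ≤ g.dens m := GenContFract.zero_le_of_den
  have hqn1 : (1:ℝ) ≤ g.dens n := by
    have := GenContFract.succ_nth_fib_le_of_nth_den (v := x) (n := n) (Or.inr (hnt (n-1)))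
    have hfib : (1:ℝ) ≤ (Nat.fib (n+1) : ℝ) := by
      exact_mod_cast Nat.fib_pos.mpr (by omega)
    linarith
  have hqmn : g.dens m ≤ g.dens n := GenContFract.of_den_mono
  set qn := g.dens n with hqn'
  set qm := g.dens m with hqm'
  have hqnpos : (0:ℝ) < qn := by linarith
  have hBt : (0:ℝ) < B + t := by linarith
  -- the ratio
  have hfr_rw : gaussMap^[n] x = y := hfrn.symm
  have hR : (g.dens (n+1) / qn) * gaussMap^[n] x = (B * qn + 1 * qm) / (qn * (B + t)) := by
    rw [hrec, hfr_rw, hyv, ← one_div, div_mul_div_comm, mul_one]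
  rw [hR]
  have hlow : (1:ℝ)/2 ≤ (B * qn + 1 * qm) / (qn * (B + t)) := by
    rw [div_le_div_iff₀ (by norm_num) (by positivity)]
    nlinarith
  have hhigh : (B * qn + 1 * qm) / (qn * (B + t)) ≤ 2 := by
    rw [div_le_iff₀ (by positivity)]
    nlinarith
  have hF := one_le_recipFibConst
  have he2 : (3:ℝ) ≤ exp 2 := by
    have := add_one_le_exp (2:ℝ)
    linarith
  constructor
  · calc exp (-(2 * recipFibConst)) ≤ exp (-2) := by
          apply exp_le_exp.mpr; linarith
      _ ≤ 1/2 := by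
          rw [exp_neg]
          have h2e : (2:ℝ) ≤ exp 2 := by linarith
          calc (exp 2)⁻¹ ≤ (2:ℝ)⁻¹ := by
                apply inv_anti₀ (by norm_num) h2e
            _ = 1/2 := by norm_num
      _ ≤ _ := hlow
  · calc (B * qn + 1 * qm) / (qn * (B + t)) ≤ 2 := hhigh
      _ ≤ exp 2 := by linarith
      _ ≤ exp (2 * recipFibConst) := by apply exp_le_exp.mpr; linarith
end
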